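/- arXiv:math/0411085 — 3 statements merged into one kernel-verified Lean document; each statement's English description precedes it below -/
import Mathlib

section
/- Let f(z) = z + a_{ν+1} z^{ν+1} + (terms of order ≥ ν+2) be a formal power series in one variable over ℂ tangent to the identity, with ν ≥ 1 and a_{ν+1} ≠ 0. Then there exists β ∈ ℂ such that f is formally conjugated to g(z) = z + z^{ν+1} + β z^{2ν+1}; moreover β is a formal invariant, i.e. if f is also formally conjugated to z + z^{ν+1} + β' z^{2ν+1} then β' = β. -/
noncomputable section

open PowerSeries

/-- Substitution `f(χ(z))` of one formal power series into another; this is the correct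
composition whenever `χ` has zero constant term. -/
def pcomp (f χ : PowerSeries ℂ) : PowerSeries ℂ :=
  PowerSeries.mk fun n =>
    ∑ k ∈ Finset.range (n + 1), PowerSeries.coeff k f * PowerSeries.coeff n (χ ^ k)

/-- `f` and `g` (formal germs tangent to the identity) are formally conjugated: there is a
formal power series `χ` with `χ(0) = 0` and `χ'(0) ≠ 0` such that `f ∘ χ = χ ∘ g`. -/
def FormallyConj (f g : PowerSeries ℂ) : Prop :=
  ∃ χ : PowerSeries ℂ, PowerSeries.constantCoeff χ = 0 ∧ PowerSeries.coeff 1 χ ≠ 0 ∧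
    pcomp f χ = pcomp χ g

open Finset

set_option linter.unusedVariables false
set_option linter.unusedSectionVars false

@[simp] lemma coeff_pcomp (f χ : PowerSeries ℂ) (n : ℕ) :
    coeff n (pcomp f χ) = ∑ k ∈ range (n + 1), coeff k f * coeff n (χ ^ k) :=
  coeff_mk _ _

/-- low coefficients of a product vanish -/
lemma coeff_mul_eq_zero {u v : PowerSeries ℂ} {p q n : ℕ}
    (hu : ∀ j, j < p → coeff j u = 0) (hv : ∀ j, j < q → coeff j v = 0)
    (hn : n < p + q) : coeff n (u * v) = 0 := by
  rw [coeff_mul]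
  apply Finset.sum_eq_zero
  rintro ⟨i, j⟩ hij
  rw [Finset.HasAntidiagonal.mem_antidiagonal] at hij
  rcases lt_or_ge i p with h | h
  · rw [hu i h, zero_mul]
  · rw [hv j (by omega), mul_zero]

/-- low coefficients of a power vanish -/
lemma coeff_pow_eq_zero {τ : PowerSeries ℂ} {m : ℕ}
    (h : ∀ j, j < m → coeff j τ = 0) :
    ∀ i d, d < i * m → coeff d (τ ^ i) = 0 := by
  intro i
  induction i with
  | zero => intro d hd; omega
  | succ i ih =>
      intro d hd
      rw [pow_succ]
      exact coeff_mul_eq_zero (p := i*m) (q := m) (fun j hj => ih j (by omega)) h (by rw [Nat.succ_mul] at hd; omega)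

lemma coeff_pow_eq_zero' {τ : PowerSeries ℂ} (h : constantCoeff τ = 0)
    {i d : ℕ} (hd : d < i) : coeff d (τ ^ i) = 0 := by
  apply coeff_pow_eq_zero (m := 1) _ i d (by omega)
  intro j hj
  interval_cases j
  simpa using h

/-- leading coefficient of a power -/
lemma coeff_pow_self {τ : PowerSeries ℂ} (h : constantCoeff τ = 0) :
    ∀ k, coeff k (τ ^ k) = (coeff 1 τ) ^ k := by
  intro k
  induction k with
  | zero => simp
  | succ k ih =>
      rw [pow_succ, coeff_mul, Finset.sum_eq_single (k, 1)]
      · rw [ih, pow_succ]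
      · rintro ⟨i, j⟩ hij hne
        rw [Finset.HasAntidiagonal.mem_antidiagonal] at hij
        rcases lt_or_ge i k with hlt | hle
        · rw [coeff_pow_eq_zero' h (by omega), zero_mul]
        · have : j = 0 := by
            rcases Nat.lt_or_ge i (k+1) with h' | h'
            · exfalso; apply hne; have : i = k := by omega
              subst this; have : j = 1 := by omega
              subst this; rfl
            · omega
          subst this
          rw [coeff_zero_eq_constantCoeff, h, mul_zero]
      · intro hmem
        exfalso; exact hmem (Finset.HasAntidiagonal.mem_antidiagonal.2 rfl)

section gseries
def gser (ν : ℕ) (β : ℂ) : PowerSeries ℂ :=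
  X + X ^ (ν + 1) + C β * X ^ (2 * ν + 1)

def us (ν : ℕ) (β : ℂ) : PowerSeries ℂ :=
  1 + X ^ ν + C β * X ^ (2 * ν)

lemma gser_eq (ν : ℕ) (β : ℂ) : gser ν β = X * us ν β := by
  unfold gser us
  ring

variable {ν : ℕ} (hν : 1 ≤ ν) {β : ℂ}

lemma coeff_gser (n : ℕ) :
    coeff n (gser ν β) =
      (if n = 1 then 1 else 0) + (if n = ν + 1 then 1 else 0)
        + β * (if n = 2 * ν + 1 then 1 else 0) := by
  unfold gser
  simp [coeff_X, coeff_X_pow, PowerSeries.coeff_C_mul]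

lemma constantCoeff_gser : constantCoeff (gser ν β) = 0 := by
  have := coeff_gser (ν := ν) (β := β) 0
  rw [coeff_zero_eq_constantCoeff] at this
  simp only [this]
  norm_num

include hν

lemma coeff_gser_one : coeff 1 (gser ν β) = 1 := by
  rw [coeff_gser]
  have h1 : ¬ (1 = ν + 1) := by omega
  have h2 : ¬ (1 = 2 * ν + 1) := by omega
  simp [h1, h2, show ν ≠ 0 by omega]

lemma coeff_gser_nuadd : coeff (ν + 1) (gser ν β) = 1 := by
  rw [coeff_gser]
  have h1 : ¬ (ν + 1 = 1) := by omega
  have h2 : ¬ (ν + 1 = 2 * ν + 1) := by omega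
  simp [h1, h2, show ν ≠ 0 by omega, show ν ≠ 2 * ν by omega]

lemma coeff_gser_top : coeff (2 * ν + 1) (gser ν β) = β := by
  rw [coeff_gser]
  have h1 : ¬ (2 * ν + 1 = 1) := by omega
  have h2 : ¬ (2 * ν + 1 = ν + 1) := by omega
  simp [h1, h2, show ν ≠ 0 by omega, show 2 * ν ≠ ν by omega]

omit hν

lemma coeff_us (n : ℕ) :
    coeff n (us ν β) =
      (if n = 0 then 1 else 0) + (if n = ν then 1 else 0)
        + β * (if n = 2 * ν then 1 else 0) := by
  unfold us
  simp [coeff_X_pow, PowerSeries.coeff_C_mul, coeff_one]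

lemma coeff_us_not_dvd {n : ℕ} (h : ¬ ν ∣ n) : coeff n (us ν β) = 0 := by
  rw [coeff_us]
  have h0 : ¬ n = 0 := fun e => h (e ▸ dvd_zero ν)
  have h1 : ¬ n = ν := fun e => h (e ▸ dvd_refl ν)
  have h2 : ¬ n = 2 * ν := fun e => h (e ▸ ⟨2, by ring⟩)
  simp [h0, h1, h2]

lemma coeff_us_pow_not_dvd (k : ℕ) : ∀ n, ¬ ν ∣ n → coeff n ((us ν β) ^ k) = 0 := by
  induction k with
  | zero =>
      intro n hn
      have h0 : n ≠ 0 := fun e => hn (e ▸ dvd_zero ν)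
      simp [coeff_one, h0]
  | succ k ih =>
      intro n hn
      rw [pow_succ, coeff_mul]
      apply Finset.sum_eq_zero
      rintro ⟨i, j⟩ hij
      rw [Finset.HasAntidiagonal.mem_antidiagonal] at hij
      by_cases hi : ν ∣ i
      · have hj : ¬ ν ∣ j := fun hj => hn (hij ▸ dvd_add hi hj)
        rw [coeff_us_not_dvd hj, mul_zero]
      · rw [ih i hi, zero_mul]

include hν
lemma constantCoeff_us_pow (k : ℕ) : coeff 0 ((us ν β) ^ k) = 1 := by
  rw [coeff_zero_eq_constantCoeff, map_pow]
  have h : constantCoeff (us ν β) = 1 := by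
    have h2 := coeff_us (ν := ν) (β := β) 0
    rw [coeff_zero_eq_constantCoeff] at h2
    rw [h2]
    have e1 : ¬ ((0:ℕ) = ν) := by omega
    have e2 : ¬ ((0:ℕ) = 2*ν) := by omega
    simp [e1, e2]
  rw [h, one_pow]
omit hν

include hν

lemma coeff_us_pow_nu (k : ℕ) : coeff ν ((us ν β) ^ k) = k := by
  induction k with
  | zero =>
      have : (ν : ℕ) ≠ 0 := by omega
      simp [coeff_one, this]
  | succ k ih =>
      rw [pow_succ, coeff_mul]
      rw [← Finset.sum_subset (s₁ := {(ν, 0), (0, ν)}) ?hsub ?hzero]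
      · have hne : ((ν:ℕ), (0:ℕ)) ≠ ((0:ℕ), ν) := by
          simp only [ne_eq, Prod.mk.injEq, not_and]
          intro h; omega
        rw [Finset.sum_pair hne, ih, constantCoeff_us_pow hν]
        have hc0 : coeff 0 (us ν β) = 1 := by
          rw [coeff_us]
          have h2 : ¬ (0 = 2 * ν) := by omega
          have h1 : ¬ ((0:ℕ) = ν) := by omega
          simp [h1, h2]
        have hcν : coeff ν (us ν β) = 1 := by
          rw [coeff_us]
          have h1 : ¬ (ν = 0) := by omega
          have h2 : ¬ (ν = 2 * ν) := by omega
          simp [h1, h2]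
        rw [hc0, hcν]
        push_cast
        ring
      case hsub =>
        intro p hp
        simp only [Finset.mem_insert, Finset.mem_singleton] at hp
        rcases hp with rfl | rfl <;> simp [Finset.HasAntidiagonal.mem_antidiagonal]
      case hzero =>
        rintro ⟨i, j⟩ hij hnot
        rw [Finset.HasAntidiagonal.mem_antidiagonal] at hij
        simp only [Finset.mem_insert, Finset.mem_singleton, Prod.mk.injEq] at hnot
        push_neg at hnot
        by_cases hj : ν ∣ j
        · have hj' : j = 0 ∨ j = ν := by
            by_cases hj0 : j = 0
            · left; exact hj0
            · right
              have h1 : ν ≤ j := Nat.le_of_dvd (by omega) hj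
              omega
          rcases hj' with rfl | rfl
          · exfalso; exact hnot.1 (by omega) rfl
          · exfalso; exact hnot.2 (by omega) rfl
        · rw [coeff_us_not_dvd hj, mul_zero]

omit hν

lemma coeff_gser_pow {n k : ℕ} (hk : k ≤ n) :
    coeff n ((gser ν β) ^ k) = coeff (n - k) ((us ν β) ^ k) := by
  rw [gser_eq, mul_pow, coeff_X_pow_mul', if_pos hk]

lemma coeff_gser_pow_lt {n k : ℕ} (hk : n < k) :
    coeff n ((gser ν β) ^ k) = 0 := by
  rw [gser_eq, mul_pow, coeff_X_pow_mul', if_neg (by omega)]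

include hν
lemma coeff_gser_pow_self (n : ℕ) : coeff n ((gser ν β) ^ n) = 1 := by
  rw [coeff_gser_pow le_rfl, Nat.sub_self, constantCoeff_us_pow hν]
omit hν

include hν
lemma coeff_gser_pow_mid (m : ℕ) : coeff (m + ν) ((gser ν β) ^ m) = m := by
  rw [coeff_gser_pow (by omega)]
  have : m + ν - m = ν := by omega
  rw [this, coeff_us_pow_nu hν]
omit hν

lemma coeff_gser_pow_ndvd {n k : ℕ} (hk : k ≤ n) (h : ¬ ν ∣ (n - k)) :
    coeff n ((gser ν β) ^ k) = 0 := by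
  rw [coeff_gser_pow hk, coeff_us_pow_not_dvd _ _ h]

end gseries

-- ACTUAL part 3

lemma nu_dvd_cases {ν d : ℕ} (hν : 1 ≤ ν) (h : ν ∣ d) : d = 0 ∨ d = ν ∨ 2 * ν ≤ d := by
  rcases h with ⟨q, rfl⟩
  match q with
  | 0 => left; rfl
  | 1 => right; left; omega
  | (q+2) =>
      right; right
      have : ν * 2 ≤ ν * (q + 2) := Nat.mul_le_mul_left ν (by omega)
      omega

lemma not_nu_dvd_between {ν d : ℕ} (hν : 1 ≤ ν) (h1 : 0 < d) (h2 : d < ν) : ¬ ν ∣ d :=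
  fun h => by rcases nu_dvd_cases hν h with rfl | rfl | h3 <;> omega

lemma not_nu_dvd_between2 {ν d : ℕ} (hν : 1 ≤ ν) (h1 : ν < d) (h2 : d < 2 * ν) : ¬ ν ∣ d :=
  fun h => by rcases nu_dvd_cases hν h with rfl | rfl | h3 <;> omega

/-- truncation: coefficients below m -/
def cut (m : ℕ) (χ : PowerSeries ℂ) : PowerSeries ℂ :=
  PowerSeries.mk fun j => if j < m then coeff j χ else 0

@[simp] lemma coeff_cut (m : ℕ) (χ : PowerSeries ℂ) (j : ℕ) :
    coeff j (cut m χ) = if j < m then coeff j χ else 0 := coeff_mk _ _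

lemma constantCoeff_cut {m : ℕ} {χ : PowerSeries ℂ} (h : constantCoeff χ = 0) (hm : 1 ≤ m) :
    constantCoeff (cut m χ) = 0 := by
  rw [← coeff_zero_eq_constantCoeff, coeff_cut, if_pos (by omega),
    coeff_zero_eq_constantCoeff, h]

/-- β-independence of powers of gser at low order -/
lemma coeff_gser_pow_beta {ν : ℕ} {β β' : ℂ} {n : ℕ} (hn : n ≤ 2 * ν) (k : ℕ) :
    coeff n ((gser ν β) ^ k) = coeff n ((gser ν β') ^ k) := by
  have hdvd : (X : PowerSeries ℂ) ^ (2 * ν + 1) ∣ (gser ν β) ^ k - (gser ν β') ^ k := by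
    refine dvd_trans ?_ (sub_dvd_pow_sub_pow _ _ k)
    have : gser ν β - gser ν β' = C (β - β') * X ^ (2 * ν + 1) := by
      unfold gser
      rw [map_sub]
      ring
    rw [this]
    exact Dvd.intro _ (mul_comm _ _)
  have := PowerSeries.X_pow_dvd_iff.1 hdvd n (by omega)
  rw [map_sub] at this
  exact sub_eq_zero.1 this

lemma coeff_pcomp_gser_beta {ν : ℕ} {β β' : ℂ} {n : ℕ} (hn : n ≤ 2 * ν) (ψ : PowerSeries ℂ) :
    coeff n (pcomp ψ (gser ν β)) = coeff n (pcomp ψ (gser ν β')) := by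
  rw [coeff_pcomp, coeff_pcomp]
  exact Finset.sum_congr rfl fun k _ => by rw [coeff_gser_pow_beta hn k]

section main
variable {ν : ℕ} {β : ℂ} {f χ : PowerSeries ℂ}
variable (hν : 1 ≤ ν) (hf0 : constantCoeff f = 0) (hf1 : coeff 1 f = 1)
variable (hmid : ∀ j, 2 ≤ j → j ≤ ν → coeff j f = 0)
variable (hχ0 : constantCoeff χ = 0)

lemma coeff_zero_pcomp (h : constantCoeff f = 0) (χ : PowerSeries ℂ) :
    coeff 0 (pcomp f χ) = 0 := by
  simp [coeff_pcomp, coeff_zero_eq_constantCoeff, h]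

set_option linter.unusedSectionVars false
include hν hf0 hmid hχ0

/-- low order coefficients of f∘χ -/
lemma small_left {n : ℕ} (h1n : 1 ≤ n) (hnν : n ≤ ν) :
    coeff n (pcomp f χ) = coeff 1 f * coeff n χ := by
  rw [coeff_pcomp]
  rw [Finset.sum_eq_single 1]
  · rw [pow_one]
  · intro k hk hne
    rw [Finset.mem_range] at hk
    match k, hne with
    | 0, _ => rw [coeff_zero_eq_constantCoeff, hf0]; simp
    | (j+2), _ => rw [hmid (j+2) (by omega) (by omega), zero_mul]
  · intro h; exact absurd (Finset.mem_range.2 (by omega)) h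

omit hf0 hmid
lemma small_right {n : ℕ} (h1n : 1 ≤ n) (hnν : n ≤ ν) :
    coeff n (pcomp χ (gser ν β)) = coeff n χ := by
  rw [coeff_pcomp]
  rw [Finset.sum_eq_single n]
  · rw [coeff_gser_pow_self hν, mul_one]
  · intro k hk hne
    rw [Finset.mem_range] at hk
    match k, hne with
    | 0, _ => rw [coeff_zero_eq_constantCoeff, hχ0]; simp
    | (j+1), hne =>
        rw [coeff_gser_pow_ndvd (by omega)
          (not_nu_dvd_between hν (by omega) (by omega)), mul_zero]
  · intro h; exact absurd (Finset.mem_range.2 (by omega)) h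
omit hχ0

include hf0 hmid hf1 hχ0
/-- order ν+1 coefficient of f∘χ -/
lemma base_left :
    coeff (ν + 1) (pcomp f χ) =
      coeff (ν + 1) χ + coeff (ν + 1) f * (coeff 1 χ) ^ (ν + 1) := by
  rw [coeff_pcomp]
  rw [← Finset.sum_subset (s₁ := {1, ν + 1})
      (by intro k hk; simp only [Finset.mem_insert, Finset.mem_singleton] at hk
          rcases hk with rfl | rfl <;> exact Finset.mem_range.2 (by omega)) ?hz]
  · rw [Finset.sum_pair (by omega : (1:ℕ) ≠ ν + 1)]
    rw [pow_one, hf1, one_mul, coeff_pow_self hχ0]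
  case hz =>
    intro k hk hnot
    rw [Finset.mem_range] at hk
    simp only [Finset.mem_insert, Finset.mem_singleton] at hnot
    push_neg at hnot
    match k, hnot with
    | 0, _ => rw [coeff_zero_eq_constantCoeff, hf0]; simp
    | (j+1), hnot =>
        rw [hmid (j+1) (by omega) (by omega), zero_mul]
omit hf0 hmid hf1
include hχ0
/-- order ν+1 coefficient of χ∘g -/
lemma base_right :
    coeff (ν + 1) (pcomp χ (gser ν β)) =
      coeff (ν + 1) χ + coeff 1 χ := by
  rw [coeff_pcomp]
  rw [← Finset.sum_subset (s₁ := {1, ν + 1})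
      (by intro k hk; simp only [Finset.mem_insert, Finset.mem_singleton] at hk
          rcases hk with rfl | rfl <;> exact Finset.mem_range.2 (by omega)) ?hz]
  · rw [Finset.sum_pair (by omega : (1:ℕ) ≠ ν + 1)]
    rw [pow_one, coeff_gser_nuadd hν, mul_one, coeff_gser_pow_self hν, mul_one, add_comm]
  case hz =>
    intro k hk hnot
    rw [Finset.mem_range] at hk
    simp only [Finset.mem_insert, Finset.mem_singleton] at hnot
    push_neg at hnot
    match k, hnot with
    | 0, _ => rw [coeff_zero_eq_constantCoeff, hχ0]; simp
    | (j+1), hnot =>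
        rw [coeff_gser_pow_ndvd (by omega)
          (not_nu_dvd_between hν (by omega) (by omega)), mul_zero]
omit hχ0

/-- order 2ν+1 coefficient of ψ∘g when ψ is supported below ν+1 -/
lemma e1_lemma {ψ : PowerSeries ℂ} (hψ0 : constantCoeff ψ = 0)
    (hψ : ∀ j, ν + 1 ≤ j → coeff j ψ = 0) :
    coeff (2 * ν + 1) (pcomp ψ (gser ν β)) = coeff 1 ψ * β := by
  rw [coeff_pcomp]
  rw [Finset.sum_eq_single 1]
  · rw [pow_one, coeff_gser_top hν]
  · intro k hk hne
    rw [Finset.mem_range] at hk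
    match k, hne with
    | 0, _ => rw [coeff_zero_eq_constantCoeff, hψ0]; simp
    | (j+1), hne =>
        rcases Nat.lt_or_ge (j+1) (ν+1) with h | h
        · rw [coeff_gser_pow_ndvd (by omega)
            (not_nu_dvd_between2 hν (by omega) (by omega)), mul_zero]
        · rw [hψ (j+1) h, zero_mul]
  · intro h; exact absurd (Finset.mem_range.2 (by omega)) h

end main

open PowerSeries Finset in
lemma sum_two_ifs {n a b : ℕ} (hab : a ≠ b) (ha : a < n) (hb : b < n) (A B : ℂ) :
    (∑ k ∈ Finset.range n, (if k = a then A else if k = b then B else 0)) = A + B := by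
  have hpt : ∀ k ∈ Finset.range n,
      (if k = a then A else if k = b then B else 0) =
        (if k = a then A else 0) + (if k = b then B else 0) := by
    intro k _
    by_cases h1 : k = a
    · subst h1; rw [if_pos rfl, if_pos rfl, if_neg hab, add_zero]
    · rw [if_neg h1, if_neg h1, zero_add]
  rw [Finset.sum_congr rfl hpt, Finset.sum_add_distrib,
    Finset.sum_ite_eq' (Finset.range n) a, Finset.sum_ite_eq' (Finset.range n) b,
    if_pos (Finset.mem_range.2 ha), if_pos (Finset.mem_range.2 hb)]


section msl
open PowerSeries Finset
variable {ν m : ℕ} {β : ℂ} {f χ : PowerSeries ℂ}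
variable (hν : 1 ≤ ν) (hm : 2 ≤ m)
variable (hf0 : constantCoeff f = 0) (hf1 : coeff 1 f = 1)
variable (hmid : ∀ j, 2 ≤ j → j ≤ ν → coeff j f = 0)
variable (hχ0 : constantCoeff χ = 0)

set_option linter.unusedSectionVars false

include hν hm hχ0

lemma key_vanish {i j : ℕ} (hn : m + ν < i + j * m) :
    coeff (m + ν) ((cut m χ) ^ i * (χ - cut m χ) ^ j) = 0 := by
  have hψ0 : constantCoeff (cut m χ) = 0 := constantCoeff_cut hχ0 (by omega)
  apply coeff_mul_eq_zero (p := i) (q := j * m)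
  · intro d hd; exact coeff_pow_eq_zero' hψ0 hd
  · intro d hd
    apply coeff_pow_eq_zero (m := m) _ j d (by omega)
    intro l hl
    rw [map_sub, coeff_cut, if_pos hl, sub_self]
  · exact hn

/-- coefficient (m+ν) of ψ^ν (χ-ψ) = λ^ν c_m -/
lemma key_cross :
    coeff (m + ν) ((cut m χ) ^ ν * (χ - cut m χ)) =
      (coeff 1 χ) ^ ν * coeff m χ := by
  have hψ0 : constantCoeff (cut m χ) = 0 := constantCoeff_cut hχ0 (by omega)
  rw [coeff_mul, Finset.sum_eq_single (ν, m)]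
  · rw [coeff_pow_self hψ0, coeff_cut, if_pos (by omega), map_sub, coeff_cut,
      if_neg (by omega), sub_zero]
  · rintro ⟨i, j⟩ hij hne
    rw [Finset.HasAntidiagonal.mem_antidiagonal] at hij
    rcases lt_or_ge i ν with h | h
    · rw [coeff_pow_eq_zero' hψ0 h, zero_mul]
    · have hjm : j < m := by
        rcases Nat.lt_or_ge j m with h' | h'
        · exact h'
        · exfalso; apply hne
          have : i = ν := by omega
          subst this
          have : j = m := by omega
          subst this; rfl
      rw [map_sub, coeff_cut, if_pos hjm, sub_self, mul_zero]
  · intro h; exact absurd (Finset.HasAntidiagonal.mem_antidiagonal.2 (by omega)) h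

/-- binomial expansion of coeff (m+ν) of χ^k in terms of cut m χ -/
lemma key_high {k : ℕ} (hk : ν + 2 ≤ k) :
    coeff (m + ν) (χ ^ k) = coeff (m + ν) ((cut m χ) ^ k) := by
  have hsplit : χ = cut m χ + (χ - cut m χ) := by ring
  conv_lhs => rw [hsplit]
  rw [add_pow]
  rw [map_sum]
  rw [Finset.sum_eq_single k]
  · simp
  · intro i hi hne
    rw [Finset.mem_range] at hi
    have : (coeff (m+ν)) ((cut m χ) ^ i * (χ - cut m χ) ^ (k - i) * ((k.choose i : ℕ) : PowerSeries ℂ)) =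
        (coeff (m+ν)) ((cut m χ) ^ i * (χ - cut m χ) ^ (k - i)) * ((k.choose i : ℕ) : ℂ) := by
      rw [← map_natCast (C (R := ℂ)) (k.choose i), coeff_mul_C]
    rw [this, key_vanish hν hm hχ0 ?hbound, zero_mul]
    case hbound =>
      have h1 : 1 ≤ k - i := by omega
      have h4 : (k - i) * m = (k - i) * (m - 1) + (k - i) * 1 := by
        rw [← Nat.mul_add]; congr 1; omega
      have h3 : (k - i) * (m - 1) ≥ 1 * (m - 1) := Nat.mul_le_mul_right (m-1) h1
      omega
  · intro h; exact absurd (Finset.mem_range.2 (by omega)) h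

lemma key_top :
    coeff (m + ν) (χ ^ (ν + 1)) = coeff (m + ν) ((cut m χ) ^ (ν + 1))
      + ((ν : ℂ) + 1) * (coeff 1 χ) ^ ν * coeff m χ := by
  have hsplit : χ = cut m χ + (χ - cut m χ) := by ring
  conv_lhs => rw [hsplit]
  rw [add_pow, map_sum]
  rw [← Finset.sum_subset (s₁ := {ν, ν + 1})
      (by intro k hk; simp only [Finset.mem_insert, Finset.mem_singleton] at hk
          rcases hk with rfl | rfl <;> exact Finset.mem_range.2 (by omega)) ?hz]
  · rw [Finset.sum_pair (by omega : ν ≠ ν + 1)]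
    have hterm1 : (coeff (m+ν)) ((cut m χ) ^ ν * (χ - cut m χ) ^ (ν + 1 - ν) * (((ν+1).choose ν : ℕ) : PowerSeries ℂ)) =
        ((ν:ℂ) + 1) * (coeff 1 χ) ^ ν * coeff m χ := by
      have : ν + 1 - ν = 1 := by omega
      rw [this, pow_one, ← map_natCast (C (R := ℂ)) ((ν+1).choose ν), coeff_mul_C,
        key_cross hν hm hχ0, Nat.choose_succ_self_right]
      push_cast
      ring
    have hterm2 : (coeff (m+ν)) ((cut m χ) ^ (ν+1) * (χ - cut m χ) ^ (ν + 1 - (ν+1)) * (((ν+1).choose (ν+1) : ℕ) : PowerSeries ℂ)) =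
        coeff (m + ν) ((cut m χ) ^ (ν + 1)) := by
      simp
    rw [hterm1, hterm2, add_comm]
  case hz =>
    intro i hi hnot
    rw [Finset.mem_range] at hi
    simp only [Finset.mem_insert, Finset.mem_singleton] at hnot
    push_neg at hnot
    have : (coeff (m+ν)) ((cut m χ) ^ i * (χ - cut m χ) ^ (ν + 1 - i) * (((ν+1).choose i : ℕ) : PowerSeries ℂ)) =
        (coeff (m+ν)) ((cut m χ) ^ i * (χ - cut m χ) ^ (ν + 1 - i)) * (((ν+1).choose i : ℕ) : ℂ) := by
      rw [← map_natCast (C (R := ℂ)) ((ν+1).choose i), coeff_mul_C]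
    rw [this, key_vanish hν hm hχ0 ?hbound, zero_mul]
    case hbound =>
      have h1 : 2 ≤ ν + 1 - i := by omega
      have h4 : (ν + 1 - i) * m = (ν + 1 - i) * (m - 1) + (ν + 1 - i) * 1 := by
        rw [← Nat.mul_add]; congr 1; omega
      have h3 : (ν + 1 - i) * (m - 1) ≥ 2 * (m - 1) := Nat.mul_le_mul_right (m-1) h1
      omega


include hf0 hf1 hmid
/-- Master structural lemma, left side -/
lemma msl_left :
    coeff (m + ν) (pcomp f χ) =
      coeff (m + ν) (pcomp f (cut m χ)) + coeff (m + ν) χ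
        + coeff (ν + 1) f * ((ν : ℂ) + 1) * (coeff 1 χ) ^ ν * coeff m χ := by
  rw [coeff_pcomp, coeff_pcomp]
  have hsum : ∀ k ∈ Finset.range (m + ν + 1),
      coeff k f * coeff (m + ν) (χ ^ k) =
        coeff k f * coeff (m + ν) ((cut m χ) ^ k) +
          (if k = 1 then coeff (m + ν) χ
           else if k = ν + 1 then
             coeff (ν + 1) f * ((ν : ℂ) + 1) * (coeff 1 χ) ^ ν * coeff m χ
           else 0) := by
    intro k hk
    rw [Finset.mem_range] at hk
    rcases Nat.lt_or_ge k 1 with h | h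
    · have : k = 0 := by omega
      subst this
      rw [coeff_zero_eq_constantCoeff, hf0]
      simp
    rcases Nat.lt_or_ge k 2 with h2 | h2
    · have : k = 1 := by omega
      subst this
      rw [if_pos rfl, pow_one, pow_one, hf1, one_mul, one_mul, coeff_cut,
        if_neg (by omega), zero_add]
    rcases Nat.lt_or_ge k (ν + 1) with h3 | h3
    · rw [hmid k h2 (by omega), zero_mul, zero_mul, zero_add,
        if_neg (by omega), if_neg (by omega)]
    rcases Nat.lt_or_ge k (ν + 2) with h4 | h4
    · have : k = ν + 1 := by omega
      subst this
      rw [if_neg (by omega), if_pos rfl, key_top hν hm hχ0]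
      ring
    · rw [if_neg (by omega), if_neg (by omega), add_zero, key_high hν hm hχ0 h4]
  rw [Finset.sum_congr rfl hsum, Finset.sum_add_distrib,
    sum_two_ifs (n := m + ν + 1) (a := 1) (b := ν + 1) (by omega) (by omega) (by omega)]
  ring

omit hf0 hf1 hmid
/-- Master structural lemma, right side -/
lemma msl_right :
    coeff (m + ν) (pcomp χ (gser ν β)) =
      coeff (m + ν) (pcomp (cut m χ) (gser ν β)) + coeff (m + ν) χ
        + (m : ℂ) * coeff m χ := by
  rw [coeff_pcomp, coeff_pcomp]
  have hsum : ∀ k ∈ Finset.range (m + ν + 1),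
      coeff k χ * coeff (m + ν) ((gser ν β) ^ k) =
        coeff k (cut m χ) * coeff (m + ν) ((gser ν β) ^ k) +
          (if k = m + ν then coeff (m + ν) χ
           else if k = m then (m : ℂ) * coeff m χ
           else 0) := by
    intro k hk
    rw [Finset.mem_range] at hk
    rcases Nat.lt_or_ge k m with h | h
    · rw [coeff_cut, if_pos h, if_neg (by omega), if_neg (by omega), add_zero]
    rcases Nat.lt_or_ge k (m + 1) with h2 | h2
    · have : k = m := by omega
      subst this
      rw [coeff_cut, if_neg (by omega), zero_mul, zero_add, if_neg (by omega),
        if_pos rfl, coeff_gser_pow_mid hν]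
      ring
    rcases Nat.lt_or_ge k (m + ν) with h3 | h3
    · rw [coeff_gser_pow_ndvd (by omega) (not_nu_dvd_between hν (by omega) (by omega)),
        mul_zero, mul_zero, zero_add, if_neg (by omega), if_neg (by omega)]
    · have : k = m + ν := by omega
      subst this
      rw [coeff_cut, if_neg (by omega), zero_mul, zero_add, if_pos rfl,
        coeff_gser_pow_self hν, mul_one]
  rw [Finset.sum_congr rfl hsum, Finset.sum_add_distrib,
    sum_two_ifs (n := m + ν + 1) (a := m + ν) (b := m) (by omega) (by omega) (by omega)]
  ring

end msl
section recursion
open PowerSeries Finset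

/-- the coefficient prescription -/
noncomputable def coefF (f : PowerSeries ℂ) (ν : ℕ) (lam : ℂ) (g : PowerSeries ℂ)
    (m : ℕ) (ψ : PowerSeries ℂ) : ℂ :=
  if m = 0 then 0 else if m = 1 then lam else
    -(PowerSeries.coeff (m + ν) (pcomp f ψ) - PowerSeries.coeff (m + ν) (pcomp ψ g))
      / ((ν : ℂ) + 1 - (m : ℂ))

/-- partial sums of the conjugating map -/
noncomputable def psiF (f : PowerSeries ℂ) (ν : ℕ) (lam : ℂ) (g : PowerSeries ℂ) :
    ℕ → PowerSeries ℂ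
  | 0 => 0
  | m + 1 => psiF f ν lam g m + C (coefF f ν lam g m (psiF f ν lam g m)) * X ^ m

/-- the coefficients of the conjugating map -/
noncomputable def cF (f : PowerSeries ℂ) (ν : ℕ) (lam : ℂ) (g : PowerSeries ℂ) (m : ℕ) : ℂ :=
  coefF f ν lam g m (psiF f ν lam g m)

/-- the conjugating map -/
noncomputable def chiF (f : PowerSeries ℂ) (ν : ℕ) (lam : ℂ) (g : PowerSeries ℂ) :
    PowerSeries ℂ :=
  PowerSeries.mk fun j => cF f ν lam g j

variable {f g : PowerSeries ℂ} {ν : ℕ} {lam : ℂ}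

lemma coeff_psiF (m j : ℕ) :
    coeff j (psiF f ν lam g m) = if j < m then cF f ν lam g j else 0 := by
  induction m with
  | zero => simp [psiF]
  | succ m ih =>
      rw [psiF, map_add, ih, PowerSeries.coeff_C_mul, PowerSeries.coeff_X_pow]
      rcases Nat.lt_trichotomy j m with h | h | h
      · have h2 : j < m + 1 := by omega
        have h3 : ¬ (j = m) := by omega
        simp [h, h2, h3]
      · subst h
        have h1 : ¬ (j < j) := by omega
        have h2 : j < j + 1 := by omega
        simp [h1, h2]
        rfl
      · have h1 : ¬ (j < m) := by omega
        have h2 : ¬ (j < m + 1) := by omega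
        have h3 : ¬ (j = m) := by omega
        simp [h1, h2, h3]

lemma psiF_eq_cut (m : ℕ) : psiF f ν lam g m = cut m (chiF f ν lam g) := by
  ext j
  rw [coeff_psiF, coeff_cut]
  unfold chiF
  rw [coeff_mk]

@[simp] lemma coeff_chiF (j : ℕ) : coeff j (chiF f ν lam g) = cF f ν lam g j :=
  coeff_mk _ _

lemma cF_zero : cF f ν lam g 0 = 0 := by unfold cF coefF; simp

lemma cF_one : cF f ν lam g 1 = lam := by unfold cF coefF; norm_num

lemma constantCoeff_chiF : constantCoeff (chiF f ν lam g) = 0 := by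
  rw [← coeff_zero_eq_constantCoeff, coeff_chiF, cF_zero]

lemma coeff_one_chiF : coeff 1 (chiF f ν lam g) = lam := by
  rw [coeff_chiF, cF_one]

lemma cF_spec {m : ℕ} (hm : 2 ≤ m) (hne : m ≠ ν + 1) :
    ((ν : ℂ) + 1 - (m : ℂ)) * cF f ν lam g m =
      -(coeff (m + ν) (pcomp f (psiF f ν lam g m))
        - coeff (m + ν) (pcomp (psiF f ν lam g m) g)) := by
  have hd : ((ν : ℂ) + 1 - (m : ℂ)) ≠ 0 := by
    intro h
    have : ((ν : ℂ) + 1) = (m : ℂ) := by linear_combination h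
    have h2 : ((ν + 1 : ℕ) : ℂ) = ((m : ℕ) : ℂ) := by push_cast; linear_combination this
    exact hne (Nat.cast_injective h2).symm
  unfold cF coefF
  rw [if_neg (by omega), if_neg (by omega)]
  field_simp

lemma cF_res (hν : 1 ≤ ν) : cF f ν lam g (ν + 1) = 0 := by
  unfold cF coefF
  rw [if_neg (by omega), if_neg (by omega)]
  have : ((ν : ℂ) + 1 - ((ν + 1 : ℕ) : ℂ)) = 0 := by push_cast; ring
  rw [this, div_zero]

end recursion
section rescale_lemmas
open PowerSeries Finset

lemma pcomp_rescale_left (f χ : PowerSeries ℂ) (μ : ℂ) :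
    pcomp f (rescale μ χ) = rescale μ (pcomp f χ) := by
  ext n
  rw [coeff_rescale, coeff_pcomp, coeff_pcomp, Finset.mul_sum]
  apply Finset.sum_congr rfl
  intro k _
  rw [← map_pow, coeff_rescale]
  ring

lemma pcomp_rescale_right {ν : ℕ} (hν : 1 ≤ ν) {μ : ℂ} (hμ : μ ^ ν = 1)
    (χ : PowerSeries ℂ) (β : ℂ) :
    pcomp (rescale μ χ) (gser ν β) = rescale μ (pcomp χ (gser ν β)) := by
  ext n
  rw [coeff_rescale, coeff_pcomp, coeff_pcomp, Finset.mul_sum]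
  apply Finset.sum_congr rfl
  intro k hk
  rw [Finset.mem_range] at hk
  rw [coeff_rescale]
  by_cases hG : coeff n ((gser ν β) ^ k) = 0
  · rw [hG]; ring
  · have hdvd : ν ∣ (n - k) := by
      by_contra hnd
      exact hG (coeff_gser_pow_ndvd (by omega) hnd)
    rcases hdvd with ⟨t, ht⟩
    have hn : n = k + ν * t := by omega
    subst hn
    rw [pow_add, pow_mul, hμ, one_pow, mul_one]
    ring

end rescale_lemmas
section existence
open PowerSeries Finset

noncomputable def betaF (f : PowerSeries ℂ) (ν : ℕ) (lam : ℂ) : ℂ :=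
  PowerSeries.coeff (2 * ν + 1) (pcomp f (psiF f ν lam (gser ν 0) (ν + 1))) / lam

variable {ν : ℕ} {f : PowerSeries ℂ} {lam : ℂ}
variable (hν : 1 ≤ ν) (hf0 : constantCoeff f = 0) (hf1 : coeff 1 f = 1)
variable (hmid : ∀ j, 2 ≤ j → j ≤ ν → coeff j f = 0)
variable (hlam : coeff (ν + 1) f * lam ^ ν = 1) (hlam0 : lam ≠ 0)

set_option linter.unusedSectionVars false

include hν

lemma psiF_agree (β : ℂ) : ∀ m, m ≤ ν + 1 →
    psiF f ν lam (gser ν β) m = psiF f ν lam (gser ν 0) m := by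
  intro m
  induction m with
  | zero => intro _; rfl
  | succ m ih =>
      intro hm
      have ih' := ih (by omega)
      rw [psiF, psiF, ih']
      congr 2
      unfold coefF
      rcases Nat.lt_or_ge m 2 with h | h
      · interval_cases m <;> norm_num
      · simp only [if_neg (show ¬ m = 0 by omega), if_neg (show ¬ m = 1 by omega)]
        rw [coeff_pcomp_gser_beta (show m + ν ≤ 2 * ν by omega)
          (ψ := psiF f ν lam (gser ν 0) m) (β' := 0)]

lemma cF_agree (β : ℂ) : ∀ m, m ≤ ν →
    cF f ν lam (gser ν β) m = cF f ν lam (gser ν 0) m := by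
  intro m hm
  unfold cF
  rw [psiF_agree hν β m (by omega)]
  unfold coefF
  rcases Nat.lt_or_ge m 2 with h | h
  · interval_cases m <;> norm_num
  · simp only [if_neg (show ¬ m = 0 by omega), if_neg (show ¬ m = 1 by omega)]
    rw [coeff_pcomp_gser_beta (show m + ν ≤ 2 * ν by omega)
      (ψ := psiF f ν lam (gser ν 0) m) (β' := 0)]

include hf0 hf1 hmid hlam hlam0

theorem conj_chiF :
    pcomp f (chiF f ν lam (gser ν (betaF f ν lam))) =
      pcomp (chiF f ν lam (gser ν (betaF f ν lam))) (gser ν (betaF f ν lam)) := by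
  set β := betaF f ν lam with hβ
  set χ := chiF f ν lam (gser ν β) with hχ
  have hχ0 : constantCoeff χ = 0 := constantCoeff_chiF
  have hχ1 : coeff 1 χ = lam := coeff_one_chiF
  have hco : coeff (ν + 1) f * ((ν : ℂ) + 1) * lam ^ ν = (ν : ℂ) + 1 := by
    linear_combination ((ν : ℂ) + 1) * hlam
  ext n
  rcases Nat.lt_or_ge n 1 with h | h
  · have : n = 0 := by omega
    subst this
    rw [coeff_zero_pcomp hf0, coeff_zero_pcomp hχ0]
  rcases Nat.lt_or_ge n (ν + 1) with h2 | h2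
  · rw [small_left hν hf0 hmid hχ0 h (by omega), small_right hν hχ0 h (by omega), hf1,
      one_mul]
  rcases Nat.lt_or_ge n (ν + 2) with h3 | h3
  · have : n = ν + 1 := by omega
    subst this
    rw [base_left hν hf0 hf1 hmid hχ0, base_right hν hχ0, hχ1]
    have : coeff (ν + 1) f * lam ^ (ν + 1) = lam := by
      rw [pow_succ]
      linear_combination lam * hlam
    rw [this]
  -- main case : n ≥ ν + 2
  obtain ⟨m, rfl⟩ : ∃ m, n = m + ν := ⟨n - ν, by omega⟩
  have hm : 2 ≤ m := by omega
  rw [msl_left hν hm hf0 hf1 hmid hχ0, msl_right hν hm hχ0, hχ1, hco]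
  have hcut : cut m χ = psiF f ν lam (gser ν β) m := (psiF_eq_cut m).symm
  rw [hcut]
  have hcm : coeff m χ = cF f ν lam (gser ν β) m := coeff_chiF m
  rw [hcm]
  by_cases hres : m = ν + 1
  · subst hres
    rw [cF_res hν, mul_zero, mul_zero, add_zero, add_zero]
    have hψ := psiF_agree hν (f := f) (lam := lam) β (ν + 1) le_rfl
    have hB : coeff ((ν + 1) + ν) (pcomp (psiF f ν lam (gser ν β) (ν + 1)) (gser ν β))
        = lam * β := by
      have e1 : coeff 1 (psiF f ν lam (gser ν β) (ν + 1)) = lam := by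
        rw [coeff_psiF, if_pos (by omega), cF_one]
      have e0 : constantCoeff (psiF f ν lam (gser ν β) (ν + 1)) = 0 := by
        rw [← coeff_zero_eq_constantCoeff, coeff_psiF, if_pos (by omega), cF_zero]
      have ehi : ∀ j, ν + 1 ≤ j → coeff j (psiF f ν lam (gser ν β) (ν + 1)) = 0 := by
        intro j hj
        rw [coeff_psiF, if_neg (by omega)]
      have := e1_lemma hν (β := β) e0 ehi
      have hrw : (ν + 1) + ν = 2 * ν + 1 := by omega
      rw [hrw, this, e1]
    have hA : coeff ((ν + 1) + ν) (pcomp f (psiF f ν lam (gser ν β) (ν + 1)))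
        = lam * β := by
      rw [hψ]
      have hrw : (ν + 1) + ν = 2 * ν + 1 := by omega
      rw [hrw, hβ]
      unfold betaF
      field_simp
    rw [hA, hB]
  · have hspec := cF_spec (f := f) (g := gser ν β) (lam := lam) hm hres
    linear_combination hspec

end existence
section uniqueness
open PowerSeries Finset

variable {ν : ℕ} {f : PowerSeries ℂ} {lam : ℂ}
variable (hν : 1 ≤ ν) (hf0 : constantCoeff f = 0) (hf1 : coeff 1 f = 1)
variable (hmid : ∀ j, 2 ≤ j → j ≤ ν → coeff j f = 0)
variable (hlam : coeff (ν + 1) f * lam ^ ν = 1) (hlam0 : lam ≠ 0)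

set_option linter.unusedSectionVars false

include hν hf0 hf1 hmid hlam hlam0

lemma cast_ne {m : ℕ} (hne : m ≠ ν + 1) : ((ν : ℂ) + 1 - (m : ℂ)) ≠ 0 := by
  intro h
  have h1 : ((ν : ℂ) + 1) = (m : ℂ) := by linear_combination h
  have h2 : ((ν + 1 : ℕ) : ℂ) = ((m : ℕ) : ℂ) := by push_cast; linear_combination h1
  exact hne (Nat.cast_injective h2).symm

lemma det_and_extract {χ χ' : PowerSeries ℂ} {β β' : ℂ}
    (h0 : constantCoeff χ = 0) (h0' : constantCoeff χ' = 0)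
    (h1 : coeff 1 χ = lam) (h1' : coeff 1 χ' = lam)
    (he : pcomp f χ = pcomp χ (gser ν β)) (he' : pcomp f χ' = pcomp χ' (gser ν β')) :
    β' = β := by
  have hco : coeff (ν + 1) f * ((ν : ℂ) + 1) * lam ^ ν = (ν : ℂ) + 1 := by
    linear_combination ((ν : ℂ) + 1) * hlam
  have eqn : ∀ (τ : PowerSeries ℂ) (b : ℂ), constantCoeff τ = 0 → coeff 1 τ = lam →
      pcomp f τ = pcomp τ (gser ν b) → ∀ m, 2 ≤ m →
      coeff (m + ν) (pcomp f (cut m τ)) + ((ν : ℂ) + 1) * coeff m τ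
        = coeff (m + ν) (pcomp (cut m τ) (gser ν b)) + (m : ℂ) * coeff m τ := by
    intro τ b ht0 ht1 hte m hm
    have h := congrArg (coeff (m + ν)) hte
    rw [msl_left hν hm hf0 hf1 hmid ht0, msl_right hν hm ht0, ht1, hco] at h
    linear_combination h
  have det : ∀ m, m ≤ ν + 1 → cut m χ = cut m χ' := by
    intro m
    induction m with
    | zero =>
        intro _
        ext j
        rw [coeff_cut, coeff_cut, if_neg (by omega), if_neg (by omega)]
    | succ m ih =>
        intro hm
        have ihm := ih (by omega)
        have hcm : coeff m χ = coeff m χ' := by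
          rcases Nat.lt_or_ge m 1 with h | h
          · have : m = 0 := by omega
            subst this
            rw [coeff_zero_eq_constantCoeff, h0, h0']
          rcases Nat.lt_or_ge m 2 with h2 | h2
          · have : m = 1 := by omega
            subst this
            rw [h1, h1']
          · have e1 := eqn χ β h0 h1 he m h2
            have e2 := eqn χ' β' h0' h1' he' m h2
            rw [← ihm] at e2
            rw [coeff_pcomp_gser_beta (show m + ν ≤ 2 * ν by omega) (β' := β)] at e2
            have key : ((ν : ℂ) + 1 - (m : ℂ)) * (coeff m χ - coeff m χ') = 0 := by
              linear_combination e1 - e2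
            rcases mul_eq_zero.1 key with hc | hc
            · exact absurd hc (cast_ne hν hf0 hf1 hmid hlam hlam0 (by omega))
            · linear_combination hc
        ext j
        rw [coeff_cut, coeff_cut]
        rcases Nat.lt_trichotomy j m with hj | hj | hj
        · have hj1 : j < m + 1 := by omega
          rw [if_pos hj1, if_pos hj1]
          have := congrArg (coeff j) ihm
          rw [coeff_cut, coeff_cut, if_pos hj, if_pos hj] at this
          exact this
        · subst hj
          rw [if_pos (by omega), if_pos (by omega), hcm]
        · rw [if_neg (by omega), if_neg (by omega)]
  -- extraction at order 2ν+1
  have e1 := eqn χ β h0 h1 he (ν + 1) (by omega)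
  have e2 := eqn χ' β' h0' h1' he' (ν + 1) (by omega)
  rw [← det (ν + 1) le_rfl] at e2
  have hrw : ν + 1 + ν = 2 * ν + 1 := by omega
  rw [hrw] at e1 e2
  push_cast at e1 e2
  have hA : coeff (2 * ν + 1) (pcomp f (cut (ν + 1) χ))
      = coeff (2 * ν + 1) (pcomp (cut (ν + 1) χ) (gser ν β)) := by
    linear_combination e1
  have hA' : coeff (2 * ν + 1) (pcomp f (cut (ν + 1) χ))
      = coeff (2 * ν + 1) (pcomp (cut (ν + 1) χ) (gser ν β')) := by
    linear_combination e2
  have hψ0 : constantCoeff (cut (ν + 1) χ) = 0 := constantCoeff_cut h0 (by omega)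
  have hψhi : ∀ j, ν + 1 ≤ j → coeff j (cut (ν + 1) χ) = 0 := by
    intro j hj
    rw [coeff_cut, if_neg (by omega)]
  have hψ1 : coeff 1 (cut (ν + 1) χ) = lam := by
    rw [coeff_cut, if_pos (by omega), h1]
  have hB := e1_lemma hν (β := β) hψ0 hψhi
  have hB' := e1_lemma hν (β := β') hψ0 hψhi
  rw [hB, hψ1] at hA
  rw [hB', hψ1] at hA'
  have : lam * β = lam * β' := hA ▸ hA'
  exact (mul_left_cancel₀ hlam0 this).symm

end uniqueness

theorem formal_classification_tangent_to_identity
    (ν : ℕ) (hν : 1 ≤ ν) (f : PowerSeries ℂ)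
    (h0 : PowerSeries.constantCoeff f = 0)
    (h1 : PowerSeries.coeff 1 f = 1)
    (hmid : ∀ j, 2 ≤ j → j ≤ ν → PowerSeries.coeff j f = 0)
    (htop : PowerSeries.coeff (ν + 1) f ≠ 0) :
    ∃ β : ℂ,
      FormallyConj f
        (PowerSeries.X + PowerSeries.X ^ (ν + 1)
          + PowerSeries.C β * PowerSeries.X ^ (2 * ν + 1)) ∧
      ∀ β' : ℂ,
        FormallyConj f
          (PowerSeries.X + PowerSeries.X ^ (ν + 1)
            + PowerSeries.C β' * PowerSeries.X ^ (2 * ν + 1)) → β' = β := by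
  classical
  open PowerSeries in
  obtain ⟨lam, hlamν⟩ : ∃ lam : ℂ, lam ^ ν = (coeff (ν + 1) f)⁻¹ :=
    IsAlgClosed.exists_pow_nat_eq _ (by omega)
  have hlam : coeff (ν + 1) f * lam ^ ν = 1 := by
    rw [hlamν]
    field_simp
  have hlam0 : lam ≠ 0 := by
    intro h
    rw [h, zero_pow (by omega : ν ≠ 0)] at hlamν
    exact htop (_root_.inv_eq_zero.1 hlamν.symm)
  set β := betaF f ν lam with hβdef
  have hconj : pcomp f (chiF f ν lam (gser ν β)) =
      pcomp (chiF f ν lam (gser ν β)) (gser ν β) :=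
    conj_chiF hν h0 h1 hmid hlam hlam0
  refine ⟨β, ⟨chiF f ν lam (gser ν β), constantCoeff_chiF, ?_, hconj⟩, ?_⟩
  · rw [coeff_one_chiF]
    exact hlam0
  · rintro β' ⟨χ', h0', h1ne', he'⟩
    have he'2 : pcomp f χ' = pcomp χ' (gser ν β') := he'
    -- linear coefficient of χ'
    have hbase := congrArg (PowerSeries.coeff (ν + 1)) he'2
    rw [base_left hν h0 h1 hmid h0', base_right hν h0'] at hbase
    set lam' := PowerSeries.coeff 1 χ' with hlam'def
    have hlam' : coeff (ν + 1) f * lam' ^ ν = 1 := by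
      have hstep : (coeff (ν + 1) f * lam' ^ ν) * lam' = 1 * lam' := by
        have h' : coeff (ν + 1) f * lam' ^ (ν + 1) = lam' := by linear_combination hbase
        rw [pow_succ] at h'
        linear_combination h'
      exact mul_right_cancel₀ h1ne' hstep
    have hpow_eq : lam' ^ ν = lam ^ ν := mul_left_cancel₀ htop (by rw [hlam, hlam'])
    set μ := lam * lam'⁻¹ with hμdef
    have hμν : μ ^ ν = 1 := by
      rw [hμdef, mul_pow, inv_pow, hpow_eq]
      field_simp
    set χ'' := PowerSeries.rescale μ χ' with hχ''def
    have h0'' : constantCoeff χ'' = 0 := by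
      rw [hχ''def, ← coeff_zero_eq_constantCoeff, PowerSeries.coeff_rescale, pow_zero,
        one_mul, coeff_zero_eq_constantCoeff, h0']
    have h1'' : coeff 1 χ'' = lam := by
      rw [hχ''def, PowerSeries.coeff_rescale, pow_one, hμdef]
      field_simp
      rfl
    have he'' : pcomp f χ'' = pcomp χ'' (gser ν β') := by
      rw [hχ''def, pcomp_rescale_left, he'2, ← pcomp_rescale_right hν hμν]
    exact det_and_extract hν h0 h1 hmid hlam hlam0 constantCoeff_chiF h0''
      coeff_one_chiF h1'' hconj he''
end
end

section
/- Let f be a formal self-map of (ℂ²,O) of the form f(z) = z + z₁^ν (P^μ(z) + O_{μ+1}), where ν ≥ 1 is the order of contact of f with {z₁=0} and μ ≥ 1 is the pure order. Let χ(z) = z + H^d(z) + O_{d+1} be a formal change of coordinates tangent to the identity preserving the line {z₁=0}, with d ≥ 2 and H^d ∈ 𝒱_d, H^d₁ = z₁ Ȟ^d₁. Then there is a formal self-map g of (ℂ²,O) with χ∘g = f∘χ, and any such g satisfies g(z) = z + z₁^ν [ P^μ(z) + ⋯ + P^{μ+d−2}(z) + P^{μ+d−1}(z) + Jac(P^μ)·H^d(z)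 − Jac(H^d)·P^μ(z) + ν Ȟ^d₁(z) P^μ(z) + O_{μ+d} ], where P^j denotes the degree-j homogeneous part of f^o and Jac(F)·v denotes multiplication of the vector v ∈ ℂ² by the Jacobian matrix of F. -/
noncomputable section

/-- Formal power series in two variables over ℂ. -/
abbrev FPS := MvPowerSeries (Fin 2) ℂ

/-- The exponent `(a, b)` (i.e. the monomial `z₁^a z₂^b`) as a `Fin 2 →₀ ℕ`. -/
def e2 (a b : ℕ) : Fin 2 →₀ ℕ := Finsupp.single 0 a + Finsupp.single 1 b

/-- Total degree of an exponent. -/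
def deg2 (m : Fin 2 →₀ ℕ) : ℕ := m 0 + m 1

/-- Substitution `f(g₁, g₂)`; this is the correct composition (by substitution of formal
power series) whenever `g₁, g₂` have zero constant term. -/
def fsubst (g : Fin 2 → FPS) (f : FPS) : FPS :=
  fun m => ∑ p ∈ Finset.range (deg2 m + 1) ×ˢ Finset.range (deg2 m + 1),
    MvPowerSeries.coeff (e2 p.1 p.2) f * MvPowerSeries.coeff m (g 0 ^ p.1 * g 1 ^ p.2)

/-- All components have zero constant term. -/
def noConst (f : Fin 2 → FPS) : Prop :=
  ∀ i, MvPowerSeries.constantCoeff (f i) = 0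

/-- Truncation keeping the homogeneous terms of total degree ≤ N. -/
def truncLE (N : ℕ) (f : FPS) : FPS :=
  fun m => if deg2 m ≤ N then MvPowerSeries.coeff m f else 0

-- ### basics on e2 / deg2

@[simp] lemma e2_apply0 (a b : ℕ) : e2 a b 0 = a := by
  simp [e2, Finsupp.single_apply]

@[simp] lemma e2_apply1 (a b : ℕ) : e2 a b 1 = b := by
  simp [e2, Finsupp.single_apply]

lemma e2_eta (m : Fin 2 →₀ ℕ) : e2 (m 0) (m 1) = m := by
  ext i
  fin_cases i
  · simp
  · simp

lemma e2_inj {a b c d : ℕ} (h : e2 a b = e2 c d) : a = c ∧ b = d := by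
  constructor
  · have := congrArg (fun m => (m : Fin 2 →₀ ℕ) 0) h; simpa using this
  · have := congrArg (fun m => (m : Fin 2 →₀ ℕ) 1) h; simpa using this

@[simp] lemma deg2_e2 (a b : ℕ) : deg2 (e2 a b) = a + b := by simp [deg2]

lemma deg2_add (p q : Fin 2 →₀ ℕ) : deg2 (p + q) = deg2 p + deg2 q := by
  simp [deg2]; ring

lemma deg2_eq_zero {m : Fin 2 →₀ ℕ} (h : deg2 m = 0) : m = 0 := by
  simp only [deg2] at h
  ext i
  fin_cases i <;> simp <;> omega

lemma deg2_single (i : Fin 2) (n : ℕ) : deg2 (Finsupp.single i n) = n := by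
  fin_cases i <;> simp [deg2, Finsupp.single_apply]

lemma deg2_degree (m : Fin 2 →₀ ℕ) : deg2 m = m.degree := by
  rw [Finsupp.degree_eq_sum]
  simp [deg2, Fin.sum_univ_two]

-- ### order predicate
open MvPowerSeries in
def OZ (k : ℕ) (f : FPS) : Prop := ∀ m, deg2 m < k → MvPowerSeries.coeff m f = 0

lemma OZ_mono {j k : ℕ} {f : FPS} (h : OZ k f) (hj : j ≤ k) : OZ j f :=
  fun m hm => h m (lt_of_lt_of_le hm hj)

lemma OZ_zero (k : ℕ) : OZ k (0 : FPS) := fun m _ => by simp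

lemma OZ_any (f : FPS) : OZ 0 f := fun _ h => absurd h (Nat.not_lt_zero _)

lemma OZ_add {k : ℕ} {f g : FPS} (hf : OZ k f) (hg : OZ k g) : OZ k (f + g) := by
  intro m hm; rw [map_add, hf m hm, hg m hm, add_zero]

lemma OZ_neg {k : ℕ} {f : FPS} (hf : OZ k f) : OZ k (-f) := by
  intro m hm; rw [map_neg, hf m hm, neg_zero]

lemma OZ_sub {k : ℕ} {f g : FPS} (hf : OZ k f) (hg : OZ k g) : OZ k (f - g) := by
  intro m hm; rw [map_sub, hf m hm, hg m hm, sub_zero]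

lemma OZ_mul {j k : ℕ} {f g : FPS} (hf : OZ j f) (hg : OZ k g) : OZ (j + k) (f * g) := by
  intro m hm
  classical
  rw [MvPowerSeries.coeff_mul]
  refine Finset.sum_eq_zero fun p hp => ?_
  rw [Finset.HasAntidiagonal.mem_antidiagonal] at hp
  have hdeg : deg2 p.1 + deg2 p.2 = deg2 m := by rw [← deg2_add, hp]
  by_cases h1 : deg2 p.1 < j
  · rw [hf p.1 h1, zero_mul]
  · rw [hg p.2 (by omega), mul_zero]

lemma OZ_mul_left {k : ℕ} {f g : FPS} (hg : OZ k g) : OZ k (f * g) := by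
  have := OZ_mul (OZ_any f) hg; simpa using this

lemma OZ_mul_right {k : ℕ} {f g : FPS} (hf : OZ k f) : OZ k (f * g) := by
  have := OZ_mul hf (OZ_any g); simpa using this

lemma OZ_sum {k : ℕ} {α : Type*} {s : Finset α} {F : α → FPS}
    (h : ∀ a ∈ s, OZ k (F a)) : OZ k (∑ a ∈ s, F a) := by
  classical
  induction s using Finset.induction_on with
  | empty => simpa using OZ_zero k
  | insert _ _ hx ih =>
      rw [Finset.sum_insert hx]
      exact OZ_add (h _ (Finset.mem_insert_self _ _))
        (ih fun a ha => h a (Finset.mem_insert_of_mem ha))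

lemma OZ_X (i : Fin 2) : OZ 1 (MvPowerSeries.X i : FPS) := by
  intro m hm
  have hm0 : m = 0 := deg2_eq_zero (by omega)
  subst hm0
  rw [MvPowerSeries.coeff_X, if_neg]
  intro h
  have h2 := congrArg deg2 h
  rw [deg2_single] at h2
  simp [deg2] at h2

lemma OZ_pow {k n : ℕ} {f : FPS} (hf : OZ k f) : OZ (n * k) (f ^ n) := by
  induction n with
  | zero => simpa using OZ_any _
  | succ n ih =>
      rw [pow_succ]
      have := OZ_mul ih hf
      rwa [show n * k + k = (n+1) * k by ring] at this

lemma OZ_X_pow (n : ℕ) (i : Fin 2) : OZ n ((MvPowerSeries.X i : FPS) ^ n) := by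
  have := OZ_pow (n := n) (OZ_X i); simpa using this

lemma OZ_monomial (s : Fin 2 →₀ ℕ) (c : ℂ) : OZ (deg2 s) (MvPowerSeries.monomial s c) := by
  intro m hm
  rw [MvPowerSeries.coeff_monomial, if_neg]
  intro h; subst h; omega

lemma OZ_coe_homog {F : MvPolynomial (Fin 2) ℂ} {D : ℕ} (hF : F.IsHomogeneous D) :
    OZ D (↑F : FPS) := by
  intro m hm
  rw [MvPolynomial.coeff_coe]
  refine hF.coeff_eq_zero ?_
  rw [← deg2_degree]; omega

lemma OZ_coeff_eq {k : ℕ} {f g : FPS} (h : OZ k (f - g)) {m : Fin 2 →₀ ℕ} (hm : deg2 m < k) :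
    MvPowerSeries.coeff m f = MvPowerSeries.coeff m g := by
  have := h m hm
  rw [map_sub, sub_eq_zero] at this
  exact this

lemma OZ_natCast_mul {k : ℕ} {f : FPS} (n : ℕ) (hf : OZ k f) : OZ k ((n : FPS) * f) :=
  OZ_mul_left hf

-- ### fsubst basics
open MvPowerSeries

lemma coeff_fsubst (g : Fin 2 → FPS) (f : FPS) (m : Fin 2 →₀ ℕ) :
    coeff m (fsubst g f) =
      ∑ p ∈ Finset.range (deg2 m + 1) ×ˢ Finset.range (deg2 m + 1),
        coeff (e2 p.1 p.2) f * coeff m (g 0 ^ p.1 * g 1 ^ p.2) := rfl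

lemma OZ_one_of_noConst {g : Fin 2 → FPS} (hg : noConst g) (i : Fin 2) : OZ 1 (g i) := by
  intro m hm
  have hm0 : m = 0 := deg2_eq_zero (by omega)
  subst hm0
  exact hg i

lemma OZ_powG {g : Fin 2 → FPS} (hg : noConst g) (a b : ℕ) :
    OZ (a + b) (g 0 ^ a * g 1 ^ b) := by
  have h0 := OZ_pow (n := a) (OZ_one_of_noConst hg 0)
  have h1 := OZ_pow (n := b) (OZ_one_of_noConst hg 1)
  have := OZ_mul h0 h1
  simpa using this

lemma coeff_powG_eq_zero {g : Fin 2 → FPS} (hg : noConst g) {a b : ℕ} {m : Fin 2 →₀ ℕ}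
    (h : deg2 m < a + b) : coeff m (g 0 ^ a * g 1 ^ b) = 0 :=
  OZ_powG hg a b m h

lemma fsubst_add (g : Fin 2 → FPS) (f₁ f₂ : FPS) :
    fsubst g (f₁ + f₂) = fsubst g f₁ + fsubst g f₂ := by
  apply MvPowerSeries.ext
  intro m
  rw [map_add, coeff_fsubst, coeff_fsubst, coeff_fsubst, ← Finset.sum_add_distrib]
  refine Finset.sum_congr rfl fun p _ => ?_
  rw [map_add, add_mul]

lemma fsubst_zero (g : Fin 2 → FPS) : fsubst g (0 : FPS) = 0 := by
  apply MvPowerSeries.ext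
  intro m
  rw [coeff_fsubst]
  simp

lemma fsubst_sub (g : Fin 2 → FPS) (f₁ f₂ : FPS) :
    fsubst g (f₁ - f₂) = fsubst g f₁ - fsubst g f₂ := by
  apply MvPowerSeries.ext
  intro m
  rw [map_sub, coeff_fsubst, coeff_fsubst, coeff_fsubst, ← Finset.sum_sub_distrib]
  refine Finset.sum_congr rfl fun p _ => ?_
  rw [map_sub, sub_mul]

lemma fsubst_sum (g : Fin 2 → FPS) {α : Type*} (s : Finset α) (F : α → FPS) :
    fsubst g (∑ a ∈ s, F a) = ∑ a ∈ s, fsubst g (F a) := by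
  classical
  induction s using Finset.induction_on with
  | empty => simpa using fsubst_zero g
  | insert _ _ hx ih => rw [Finset.sum_insert hx, fsubst_add, ih, Finset.sum_insert hx]

lemma monomial_e2 (a b : ℕ) (c : ℂ) :
    (MvPowerSeries.monomial (e2 a b) c : FPS) =
      MvPowerSeries.C c * X 0 ^ a * X 1 ^ b := by
  have he : e2 a b = (0 + Finsupp.single 0 a) + Finsupp.single 1 b := by rw [zero_add]; rfl
  rw [X_pow_eq, X_pow_eq, show (MvPowerSeries.C c : FPS) = monomial 0 c from rfl,
    monomial_mul_monomial, monomial_mul_monomial, mul_one, mul_one, ← he]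

lemma fsubst_monomial {g : Fin 2 → FPS} (hg : noConst g) (a b : ℕ) (c : ℂ) :
    fsubst g (MvPowerSeries.monomial (e2 a b) c) =
      MvPowerSeries.C c * g 0 ^ a * g 1 ^ b := by
  classical
  apply MvPowerSeries.ext
  intro m
  rw [coeff_fsubst]
  have key : ∀ p : ℕ × ℕ,
      coeff (e2 p.1 p.2) (MvPowerSeries.monomial (e2 a b) c) *
        coeff m (g 0 ^ p.1 * g 1 ^ p.2)
      = if p = (a, b) then c * coeff m (g 0 ^ a * g 1 ^ b) else 0 := by
    intro p
    by_cases h : p = (a, b)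
    · subst h; rw [if_pos rfl, MvPowerSeries.coeff_monomial_same]
    · rw [if_neg h, MvPowerSeries.coeff_monomial_ne, zero_mul]
      intro he
      obtain ⟨h1, h2⟩ := e2_inj he
      exact h (Prod.ext h1 h2)
  simp_rw [key]
  rw [Finset.sum_ite_eq' _ (a, b)]
  rw [mul_comm (MvPowerSeries.C c) (g 0 ^ a), mul_assoc, mul_comm (MvPowerSeries.C c)]
  rw [← mul_assoc, MvPowerSeries.coeff_mul_C]
  by_cases hab : (a, b) ∈ Finset.range (deg2 m + 1) ×ˢ Finset.range (deg2 m + 1)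
  · rw [if_pos hab, mul_comm]
  · rw [if_neg hab]
    have : deg2 m < a + b := by
      simp only [Finset.mem_product, Finset.mem_range, not_and_or, not_lt] at hab
      omega
    rw [coeff_powG_eq_zero hg this, zero_mul]

lemma fsubst_X {g : Fin 2 → FPS} (hg : noConst g) (i : Fin 2) :
    fsubst g (X i : FPS) = g i := by
  have h1 : (X i : FPS) = MvPowerSeries.monomial (e2 (if i = 0 then 1 else 0) (if i = 0 then 0 else 1)) 1 := by
    fin_cases i
    · rw [X]; congr 1; simp [e2]
    · rw [X]; congr 1; simp [e2]
  rw [h1, fsubst_monomial hg]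
  fin_cases i
  · simp
  · simp

lemma fsubst_congr_outer {g : Fin 2 → FPS} (hg : noConst g) {f₁ f₂ : FPS} {m : Fin 2 →₀ ℕ}
    (h : ∀ a b : ℕ, a + b ≤ deg2 m → coeff (e2 a b) f₁ = coeff (e2 a b) f₂) :
    coeff m (fsubst g f₁) = coeff m (fsubst g f₂) := by
  rw [coeff_fsubst, coeff_fsubst]
  refine Finset.sum_congr rfl fun p _ => ?_
  by_cases hp : p.1 + p.2 ≤ deg2 m
  · rw [h p.1 p.2 hp]
  · rw [coeff_powG_eq_zero hg (by omega), mul_zero, mul_zero]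

lemma fsubst_id (f : FPS) : fsubst (fun i => (X i : FPS)) f = f := by
  classical
  apply MvPowerSeries.ext
  intro m
  rw [coeff_fsubst]
  have key : ∀ p : ℕ × ℕ,
      coeff (e2 p.1 p.2) f * coeff m ((X 0 : FPS) ^ p.1 * X 1 ^ p.2)
      = if p = (m 0, m 1) then coeff m f else 0 := by
    intro p
    have hmon : ((X 0 : FPS) ^ p.1 * X 1 ^ p.2) = MvPowerSeries.monomial (e2 p.1 p.2) 1 := by
      rw [monomial_e2]; simp
    rw [hmon]
    by_cases h : p = (m 0, m 1)
    · subst h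
      rw [if_pos rfl]
      have h2 : e2 ((m 0, m 1).1) ((m 0, m 1).2) = m := e2_eta m
      rw [h2, MvPowerSeries.coeff_monomial_same, mul_one]
    · rw [MvPowerSeries.coeff_monomial_ne, mul_zero, if_neg h]
      intro he
      apply h
      have : e2 (m 0) (m 1) = e2 p.1 p.2 := by rw [e2_eta, he]
      obtain ⟨h1, h2⟩ := e2_inj this
      exact Prod.ext h1.symm h2.symm
  simp_rw [key]
  rw [Finset.sum_ite_eq' _ (m 0, m 1)]
  rw [if_pos]
  simp only [Finset.mem_product, Finset.mem_range]
  constructor <;> simp [deg2] <;> omega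

-- ### multiplicativity of fsubst

lemma e2_add (a b c d : ℕ) : e2 a b + e2 c d = e2 (a + c) (b + d) := by
  ext i; fin_cases i <;> simp

/-- truncation as a finite sum of monomials -/
def Tr (N : ℕ) (f : FPS) : FPS :=
  ∑ p ∈ Finset.range (N + 1) ×ˢ Finset.range (N + 1),
    MvPowerSeries.monomial (e2 p.1 p.2) (coeff (e2 p.1 p.2) f)

lemma coeff_Tr (N : ℕ) (f : FPS) {m : Fin 2 →₀ ℕ} (h : deg2 m ≤ N) :
    coeff m (Tr N f) = coeff m f := by
  classical
  rw [Tr, map_sum]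
  have key : ∀ p : ℕ × ℕ,
      coeff m (MvPowerSeries.monomial (e2 p.1 p.2) (coeff (e2 p.1 p.2) f))
      = if p = (m 0, m 1) then coeff m f else 0 := by
    intro p
    by_cases hp : p = (m 0, m 1)
    · subst hp
      rw [if_pos rfl]
      have h2 : e2 ((m 0, m 1).1) ((m 0, m 1).2) = m := e2_eta m
      rw [h2, MvPowerSeries.coeff_monomial_same]
    · rw [if_neg hp, MvPowerSeries.coeff_monomial_ne]
      intro he
      apply hp
      have : e2 (m 0) (m 1) = e2 p.1 p.2 := by rw [e2_eta, he]
      obtain ⟨h1, h2⟩ := e2_inj this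
      exact Prod.ext h1.symm h2.symm
  simp_rw [key]
  rw [Finset.sum_ite_eq' _ (m 0, m 1), if_pos]
  simp only [Finset.mem_product, Finset.mem_range]
  simp only [deg2] at h
  omega

lemma fsubst_Tr {g : Fin 2 → FPS} (hg : noConst g) (N : ℕ) (f : FPS) :
    fsubst g (Tr N f) = ∑ p ∈ Finset.range (N + 1) ×ˢ Finset.range (N + 1),
      MvPowerSeries.C (coeff (e2 p.1 p.2) f) * g 0 ^ p.1 * g 1 ^ p.2 := by
  rw [Tr, fsubst_sum]
  exact Finset.sum_congr rfl fun p _ => fsubst_monomial hg _ _ _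

lemma fsubst_Tr_mul {g : Fin 2 → FPS} (hg : noConst g) (N : ℕ) (f₁ f₂ : FPS) :
    fsubst g (Tr N f₁ * Tr N f₂) = fsubst g (Tr N f₁) * fsubst g (Tr N f₂) := by
  rw [fsubst_Tr hg, fsubst_Tr hg, Finset.sum_mul_sum]
  rw [Tr, Tr, Finset.sum_mul_sum, fsubst_sum]
  refine Finset.sum_congr rfl fun p _ => ?_
  rw [fsubst_sum]
  refine Finset.sum_congr rfl fun q _ => ?_
  rw [MvPowerSeries.monomial_mul_monomial, e2_add, fsubst_monomial hg, map_mul, pow_add, pow_add]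
  ring

lemma coeff_Tr_mul (N : ℕ) (f₁ f₂ : FPS) {m : Fin 2 →₀ ℕ} (h : deg2 m ≤ N) :
    coeff m (Tr N f₁ * Tr N f₂) = coeff m (f₁ * f₂) := by
  classical
  rw [MvPowerSeries.coeff_mul, MvPowerSeries.coeff_mul]
  refine Finset.sum_congr rfl fun p hp => ?_
  rw [Finset.HasAntidiagonal.mem_antidiagonal] at hp
  have hd : deg2 p.1 + deg2 p.2 = deg2 m := by rw [← deg2_add, hp]
  rw [coeff_Tr N f₁ (by omega), coeff_Tr N f₂ (by omega)]

lemma fsubst_mul {g : Fin 2 → FPS} (hg : noConst g) (f₁ f₂ : FPS) :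
    fsubst g (f₁ * f₂) = fsubst g f₁ * fsubst g f₂ := by
  apply MvPowerSeries.ext
  intro m
  set n := deg2 m with hn
  have step1 : coeff m (fsubst g (f₁ * f₂)) = coeff m (fsubst g (Tr n f₁ * Tr n f₂)) := by
    refine fsubst_congr_outer hg fun a b hab => ?_
    rw [coeff_Tr_mul n f₁ f₂ (by rw [deg2_e2]; omega)]
  have step3 : coeff m (fsubst g (Tr n f₁) * fsubst g (Tr n f₂))
      = coeff m (fsubst g f₁ * fsubst g f₂) := by
    classical
    rw [MvPowerSeries.coeff_mul, MvPowerSeries.coeff_mul]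
    refine Finset.sum_congr rfl fun p hp => ?_
    rw [Finset.HasAntidiagonal.mem_antidiagonal] at hp
    have hd : deg2 p.1 + deg2 p.2 = deg2 m := by rw [← deg2_add, hp]
    have c1 : coeff p.1 (fsubst g (Tr n f₁)) = coeff p.1 (fsubst g f₁) :=
      fsubst_congr_outer hg fun a b hab => coeff_Tr n f₁ (by rw [deg2_e2]; omega)
    have c2 : coeff p.2 (fsubst g (Tr n f₂)) = coeff p.2 (fsubst g f₂) :=
      fsubst_congr_outer hg fun a b hab => coeff_Tr n f₂ (by rw [deg2_e2]; omega)
    rw [c1, c2]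
  rw [step1, fsubst_Tr_mul hg, step3]

lemma fsubst_pow {g : Fin 2 → FPS} (hg : noConst g) (f : FPS) (n : ℕ) :
    fsubst g (f ^ n) = fsubst g f ^ n := by
  induction n with
  | zero =>
      rw [pow_zero, pow_zero]
      have h1 : (MvPowerSeries.monomial (e2 0 0) 1 : FPS) = 1 := by
        rw [monomial_e2]; simp
      rw [← h1, fsubst_monomial hg, h1]; simp
  | succ n ih => rw [pow_succ, pow_succ, fsubst_mul hg, ih]

lemma fsubst_one {g : Fin 2 → FPS} (hg : noConst g) : fsubst g (1 : FPS) = 1 := by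
  have := fsubst_pow hg 1 0
  simpa using this

-- order preservation under outer composition
lemma OZ_fsubst {g : Fin 2 → FPS} (hg : noConst g) {k : ℕ} {f : FPS} (hf : OZ k f) :
    OZ k (fsubst g f) := by
  intro m hm
  rw [coeff_fsubst]
  refine Finset.sum_eq_zero fun p _ => ?_
  by_cases hp : p.1 + p.2 ≤ deg2 m
  · rw [hf (e2 p.1 p.2) (by rw [deg2_e2]; omega), zero_mul]
  · rw [coeff_powG_eq_zero hg (by omega), mul_zero]

lemma noConst_fsubst {g : Fin 2 → FPS} (hg : noConst g) {f : Fin 2 → FPS} (hf : noConst f) :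
    noConst (fun i => fsubst g (f i)) := by
  intro i
  have := OZ_fsubst hg (OZ_one_of_noConst hf i) 0 (by simp [deg2])
  simpa [MvPowerSeries.coeff_zero_eq_constantCoeff] using this

-- ### Lipschitz estimates for fsubst

lemma coeff_pow_diff {x y : FPS} (hx : OZ 1 x) (hy : OZ 1 y) {t : ℕ} (hxy : OZ t (x - y)) :
    ∀ (n : ℕ) (m : Fin 2 →₀ ℕ), deg2 m + 1 < n + t → coeff m (x ^ n - y ^ n) = 0 := by
  intro n
  induction n with
  | zero => intro m _; simp
  | succ n ih =>
      intro m hm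
      have key : x ^ (n+1) - y ^ (n+1) = x * (x ^ n - y ^ n) + (x - y) * y ^ n := by ring
      rw [key, map_add]
      have t1 : coeff m (x * (x ^ n - y ^ n)) = 0 := by
        classical
        rw [MvPowerSeries.coeff_mul]
        refine Finset.sum_eq_zero fun p hp => ?_
        rw [Finset.HasAntidiagonal.mem_antidiagonal] at hp
        have hd : deg2 p.1 + deg2 p.2 = deg2 m := by rw [← deg2_add, hp]
        by_cases h1 : deg2 p.1 < 1
        · rw [hx p.1 h1, zero_mul]
        · rw [ih p.2 (by omega), mul_zero]
      have t2 : coeff m ((x - y) * y ^ n) = 0 := by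
        classical
        rw [MvPowerSeries.coeff_mul]
        refine Finset.sum_eq_zero fun p hp => ?_
        rw [Finset.HasAntidiagonal.mem_antidiagonal] at hp
        have hd : deg2 p.1 + deg2 p.2 = deg2 m := by rw [← deg2_add, hp]
        by_cases h1 : deg2 p.1 < t
        · rw [hxy p.1 h1, zero_mul]
        · have hyn : OZ n (y ^ n) := by simpa using OZ_pow (n := n) hy
          rw [hyn p.2 (by omega), mul_zero]
      rw [t1, t2, add_zero]

lemma coeff_powG_diff {x0 x1 y0 y1 : FPS} (hx0 : OZ 1 x0) (hx1 : OZ 1 x1)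
    (hy0 : OZ 1 y0) (hy1 : OZ 1 y1) {t : ℕ}
    (h0 : OZ t (x0 - y0)) (h1 : OZ t (x1 - y1)) (a b : ℕ) :
    ∀ m : Fin 2 →₀ ℕ, deg2 m + 1 < a + b + t →
      coeff m (x0 ^ a * x1 ^ b - y0 ^ a * y1 ^ b) = 0 := by
  intro m hm
  have key : x0 ^ a * x1 ^ b - y0 ^ a * y1 ^ b
      = x0 ^ a * (x1 ^ b - y1 ^ b) + (x0 ^ a - y0 ^ a) * y1 ^ b := by ring
  rw [key, map_add]
  have t1 : coeff m (x0 ^ a * (x1 ^ b - y1 ^ b)) = 0 := by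
    classical
    rw [MvPowerSeries.coeff_mul]
    refine Finset.sum_eq_zero fun p hp => ?_
    rw [Finset.HasAntidiagonal.mem_antidiagonal] at hp
    have hd : deg2 p.1 + deg2 p.2 = deg2 m := by rw [← deg2_add, hp]
    by_cases hc : deg2 p.1 < a
    · have hxa : OZ a (x0 ^ a) := by simpa using OZ_pow (n := a) hx0
      rw [hxa p.1 hc, zero_mul]
    · rw [coeff_pow_diff hx1 hy1 h1 b p.2 (by omega), mul_zero]
  have t2 : coeff m ((x0 ^ a - y0 ^ a) * y1 ^ b) = 0 := by
    classical
    rw [MvPowerSeries.coeff_mul]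
    refine Finset.sum_eq_zero fun p hp => ?_
    rw [Finset.HasAntidiagonal.mem_antidiagonal] at hp
    have hd : deg2 p.1 + deg2 p.2 = deg2 m := by rw [← deg2_add, hp]
    by_cases hc : deg2 p.1 + 1 < a + t
    · rw [coeff_pow_diff hx0 hy0 h0 a p.1 hc, zero_mul]
    · have hyb : OZ b (y1 ^ b) := by simpa using OZ_pow (n := b) hy1
      rw [hyb p.2 (by omega), mul_zero]
  rw [t1, t2, add_zero]

/-- Lipschitz estimate: composing an order-`k` series with two maps that agree to order `t`. -/
lemma coeff_fsubst_diff {g g' : Fin 2 → FPS} (hg : noConst g) (hg' : noConst g')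
    {t : ℕ} (hdiff : ∀ i, OZ t (g i - g' i)) {k : ℕ} {f : FPS} (hf : OZ k f) :
    ∀ m : Fin 2 →₀ ℕ, deg2 m + 1 < k + t →
      coeff m (fsubst g f - fsubst g' f) = 0 := by
  intro m hm
  rw [map_sub, coeff_fsubst, coeff_fsubst, ← Finset.sum_sub_distrib]
  refine Finset.sum_eq_zero fun p _ => ?_
  rw [← mul_sub]
  by_cases hp : p.1 + p.2 < k
  · rw [hf _ (by rw [deg2_e2]; omega), zero_mul]
  · rw [← map_sub,
      coeff_powG_diff (OZ_one_of_noConst hg 0) (OZ_one_of_noConst hg 1)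
        (OZ_one_of_noConst hg' 0) (OZ_one_of_noConst hg' 1)
        (hdiff 0) (hdiff 1) p.1 p.2 m (by omega), mul_zero]

-- ### first-order Taylor expansion

lemma OZ_term {B u : FPS} (hB : OZ 1 B) {t : ℕ} (hu : OZ t u) (a : ℕ) :
    OZ (a + t - 1) ((a : FPS) * (B ^ (a - 1) * u)) := by
  cases a with
  | zero => simpa using OZ_zero _
  | succ n =>
      have hBn : OZ n (B ^ n) := by simpa using OZ_pow (n := n) hB
      have := OZ_mul_left (f := (((n : ℕ) + 1 : ℕ) : FPS)) (OZ_mul hBn hu)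
      simpa [Nat.add_sub_cancel] using this

lemma OZ_bin_aux {B u : FPS} (hB : OZ 1 B) {t : ℕ} (hu : OZ t u) (ht : 1 ≤ t) :
    ∀ n : ℕ, OZ (n + 1 + 2 * t - 2)
      ((B + u) ^ (n + 1) - (B ^ (n + 1) + ((n + 1 : ℕ) : FPS) * (B ^ n * u))) := by
  intro n
  induction n with
  | zero =>
      have : (B + u) ^ 1 - (B ^ 1 + ((1 : ℕ) : FPS) * (B ^ 0 * u)) = 0 := by
        push_cast
        ring
      rw [this]
      exact OZ_zero _
  | succ n ih =>
      have hBu : OZ 1 (B + u) := OZ_add hB (OZ_mono hu ht)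
      have key : (B + u) ^ (n + 2) - (B ^ (n + 2) + ((n + 2 : ℕ) : FPS) * (B ^ (n + 1) * u))
          = (B + u) * ((B + u) ^ (n + 1) - (B ^ (n + 1) + ((n + 1 : ℕ) : FPS) * (B ^ n * u)))
            + ((n + 1 : ℕ) : FPS) * (u * (B ^ n * u)) := by
        rw [show (B + u) ^ (n + 2) = (B + u) * (B + u) ^ (n + 1) by ring,
          show B ^ (n + 2) = B * B ^ (n + 1) by ring,
          show B ^ (n + 1) = B * B ^ n by ring]
        push_cast
        ring
      rw [key]
      refine OZ_add ?_ ?_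
      · have := OZ_mul hBu ih
        exact OZ_mono this (by omega)
      · have hBn : OZ n (B ^ n) := by simpa using OZ_pow (n := n) hB
        have := OZ_mul_left (f := ((n + 1 : ℕ) : FPS)) (OZ_mul hu (OZ_mul hBn hu))
        exact OZ_mono this (by omega)

lemma OZ_bin {B u : FPS} (hB : OZ 1 B) {t : ℕ} (hu : OZ t u) (ht : 1 ≤ t) (a : ℕ) :
    OZ (a + 2 * t - 2) ((B + u) ^ a - (B ^ a + (a : FPS) * (B ^ (a - 1) * u))) := by
  cases a with
  | zero =>
      have : (B + u) ^ 0 - (B ^ 0 + ((0 : ℕ) : FPS) * (B ^ (0 - 1) * u)) = 0 := by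
        push_cast; ring
      rw [this]; exact OZ_zero _
  | succ n => simpa [Nat.add_sub_cancel] using OZ_bin_aux hB hu ht n

lemma OZ_prodTaylor {u0 u1 : FPS} {t : ℕ} (hu0 : OZ t u0) (hu1 : OZ t u1) (ht : 1 ≤ t)
    (a b : ℕ) :
    OZ (a + b + 2 * t - 2)
      (((MvPowerSeries.X 0 : FPS) + u0) ^ a * ((MvPowerSeries.X 1 : FPS) + u1) ^ b
        - ((MvPowerSeries.X 0 : FPS) ^ a * (MvPowerSeries.X 1 : FPS) ^ b
            + (a : FPS) * ((MvPowerSeries.X 0 : FPS) ^ (a - 1) * (MvPowerSeries.X 1 : FPS) ^ b * u0)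
            + (b : FPS) * ((MvPowerSeries.X 0 : FPS) ^ a * (MvPowerSeries.X 1 : FPS) ^ (b - 1) * u1))) := by
  set B0 : FPS := MvPowerSeries.X 0 with hB0
  set B1 : FPS := MvPowerSeries.X 1 with hB1
  have hXB0 : OZ 1 B0 := OZ_X 0
  have hXB1 : OZ 1 B1 := OZ_X 1
  set S0 : FPS := B0 ^ a + (a : FPS) * (B0 ^ (a - 1) * u0) with hS0
  set S1 : FPS := B1 ^ b + (b : FPS) * (B1 ^ (b - 1) * u1) with hS1
  have hE0 := OZ_bin hXB0 hu0 ht a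
  have hE1 := OZ_bin hXB1 hu1 ht b
  have key : (B0 + u0) ^ a * (B1 + u1) ^ b
      - (B0 ^ a * B1 ^ b + (a : FPS) * (B0 ^ (a - 1) * B1 ^ b * u0)
          + (b : FPS) * (B0 ^ a * B1 ^ (b - 1) * u1))
      = ((B0 + u0) ^ a - S0) * (B1 + u1) ^ b + S0 * ((B1 + u1) ^ b - S1)
        + ((a : FPS) * (B0 ^ (a - 1) * u0)) * ((b : FPS) * (B1 ^ (b - 1) * u1)) := by
    rw [hS0, hS1]; ring
  rw [key]
  refine OZ_add (OZ_add ?_ ?_) ?_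
  · have hpow : OZ b ((B1 + u1) ^ b) := by
      simpa using OZ_pow (n := b) (OZ_add hXB1 (OZ_mono hu1 ht))
    exact OZ_mono (OZ_mul hE0 hpow) (by omega)
  · have hS0oz : OZ a S0 :=
      OZ_add (by simpa using OZ_pow (n := a) hXB0) (OZ_mono (OZ_term hXB0 hu0 a) (by omega))
    exact OZ_mono (OZ_mul hS0oz hE1) (by omega)
  · exact OZ_mono (OZ_mul (OZ_term hXB0 hu0 a) (OZ_term hXB1 hu1 b)) (by omega)

-- ### Taylor expansion for polynomials

lemma noConst_X_add {u : Fin 2 → FPS} {t : ℕ} (hu : ∀ j, OZ t (u j)) (ht : 1 ≤ t) :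
    noConst (fun i => (MvPowerSeries.X i : FPS) + u i) := by
  intro i
  have h1 : coeff 0 ((MvPowerSeries.X i : FPS) + u i) = 0 := by
    rw [map_add, (OZ_X i) 0 (by simp [deg2]), (OZ_mono (hu i) ht) 0 (by simp [deg2]), add_zero]
  simpa [MvPowerSeries.coeff_zero_eq_constantCoeff] using h1

lemma e2_sub0 (a b : ℕ) : e2 a b - Finsupp.single 0 1 = e2 (a - 1) b := by
  ext i; fin_cases i <;> simp [Finsupp.tsub_apply]

lemma e2_sub1 (a b : ℕ) : e2 a b - Finsupp.single 1 1 = e2 a (b - 1) := by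
  ext i; fin_cases i <;> simp [Finsupp.tsub_apply]

lemma taylor_monomial {u : Fin 2 → FPS} {t : ℕ} (hu : ∀ j, OZ t (u j)) (ht : 1 ≤ t)
    (a b : ℕ) (c : ℂ) :
    OZ (a + b + 2 * t - 2)
      (fsubst (fun i => (MvPowerSeries.X i : FPS) + u i) ↑(MvPolynomial.monomial (e2 a b) c)
        - (↑(MvPolynomial.monomial (e2 a b) c)
            + ∑ j : Fin 2, ↑(MvPolynomial.pderiv j (MvPolynomial.monomial (e2 a b) c)) * u j)) := by
  have hg := noConst_X_add hu ht
  have hp0 : (↑(MvPolynomial.pderiv (0 : Fin 2) (MvPolynomial.monomial (e2 a b) c)) : FPS)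
      = MvPowerSeries.C c * (a : FPS)
        * ((MvPowerSeries.X 0 : FPS) ^ (a - 1) * (MvPowerSeries.X 1 : FPS) ^ b) := by
    rw [MvPolynomial.pderiv_monomial, e2_sub0, MvPolynomial.coe_monomial, monomial_e2,
      e2_apply0, map_mul, map_natCast]
    ring
  have hp1 : (↑(MvPolynomial.pderiv (1 : Fin 2) (MvPolynomial.monomial (e2 a b) c)) : FPS)
      = MvPowerSeries.C c * (b : FPS)
        * ((MvPowerSeries.X 0 : FPS) ^ a * (MvPowerSeries.X 1 : FPS) ^ (b - 1)) := by
    rw [MvPolynomial.pderiv_monomial, e2_sub1, MvPolynomial.coe_monomial, monomial_e2,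
      e2_apply1, map_mul, map_natCast]
    ring
  have key : fsubst (fun i => (MvPowerSeries.X i : FPS) + u i) ↑(MvPolynomial.monomial (e2 a b) c)
        - ((↑(MvPolynomial.monomial (e2 a b) c) : FPS)
            + ∑ j : Fin 2, ↑(MvPolynomial.pderiv j (MvPolynomial.monomial (e2 a b) c)) * u j)
      = MvPowerSeries.C c *
          (((MvPowerSeries.X 0 : FPS) + u 0) ^ a * ((MvPowerSeries.X 1 : FPS) + u 1) ^ b
            - ((MvPowerSeries.X 0 : FPS) ^ a * (MvPowerSeries.X 1 : FPS) ^ b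
                + (a : FPS) * ((MvPowerSeries.X 0 : FPS) ^ (a - 1) * (MvPowerSeries.X 1 : FPS) ^ b * u 0)
                + (b : FPS) * ((MvPowerSeries.X 0 : FPS) ^ a * (MvPowerSeries.X 1 : FPS) ^ (b - 1) * u 1))) := by
    rw [MvPolynomial.coe_monomial, fsubst_monomial hg, monomial_e2]
    simp only [Fin.sum_univ_two, hp0, hp1]
    ring
  rw [key]
  exact OZ_mul_left (OZ_prodTaylor (hu 0) (hu 1) ht a b)

lemma taylor_poly {u : Fin 2 → FPS} {t : ℕ} (hu : ∀ j, OZ t (u j)) (ht : 1 ≤ t)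
    (F : MvPolynomial (Fin 2) ℂ) {D : ℕ} (hF : ∀ s ∈ F.support, D ≤ deg2 s) :
    OZ (D + 2 * t - 2)
      (fsubst (fun i => (MvPowerSeries.X i : FPS) + u i) ↑F
        - (↑F + ∑ j : Fin 2, ↑(MvPolynomial.pderiv j F) * u j)) := by
  classical
  have e := MvPolynomial.as_sum F
  have h1 : (↑F : FPS) = ∑ v ∈ F.support, (↑(MvPolynomial.monomial v (MvPolynomial.coeff v F)) : FPS) := by
    conv_lhs => rw [e]
    exact map_sum MvPolynomial.coeToMvPowerSeries.ringHom _ _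
  have h3 : ∀ j : Fin 2, (↑(MvPolynomial.pderiv j F) : FPS)
      = ∑ v ∈ F.support, (↑(MvPolynomial.pderiv j (MvPolynomial.monomial v (MvPolynomial.coeff v F))) : FPS) := by
    intro j
    conv_lhs => rw [e]
    rw [map_sum (MvPolynomial.pderiv j)]
    exact map_sum MvPolynomial.coeToMvPowerSeries.ringHom _ _
  have hsum : fsubst (fun i => (MvPowerSeries.X i : FPS) + u i) ↑F
        - (↑F + ∑ j : Fin 2, ↑(MvPolynomial.pderiv j F) * u j)
      = ∑ v ∈ F.support,
          (fsubst (fun i => (MvPowerSeries.X i : FPS) + u i) ↑(MvPolynomial.monomial v (MvPolynomial.coeff v F))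
            - (↑(MvPolynomial.monomial v (MvPolynomial.coeff v F))
                + ∑ j : Fin 2, ↑(MvPolynomial.pderiv j (MvPolynomial.monomial v (MvPolynomial.coeff v F))) * u j)) := by
    conv_lhs => rw [h1, fsubst_sum]
    rw [Fin.sum_univ_two, h3 0, h3 1, Finset.sum_mul, Finset.sum_mul,
      ← Finset.sum_add_distrib, ← Finset.sum_add_distrib, ← Finset.sum_sub_distrib]
    refine Finset.sum_congr rfl fun v _ => ?_
    rw [Fin.sum_univ_two]
  rw [hsum]
  refine OZ_sum fun v hv => ?_
  have hv2 : e2 (v 0) (v 1) = v := e2_eta v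
  have := taylor_monomial hu ht (v 0) (v 1) (MvPolynomial.coeff v F)
  rw [hv2] at this
  refine OZ_mono this ?_
  have := hF v hv
  simp only [deg2] at this ⊢
  omega

-- ### existence of the conjugated map

def gseq (R F : Fin 2 → FPS) : ℕ → Fin 2 → FPS
  | 0 => fun i => MvPowerSeries.X i
  | (k+1) => fun i => F i - fsubst (gseq R F k) (R i)

section existence

variable {R F : Fin 2 → FPS}

lemma gseq_noConst (hR : ∀ i, OZ 2 (R i)) (hF : noConst F) : ∀ k, noConst (gseq R F k) := by
  intro k
  induction k with
  | zero => intro i; simp [gseq, MvPowerSeries.constantCoeff_X]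
  | succ k ih =>
      intro i
      have h1 : coeff 0 (fsubst (gseq R F k) (R i)) = 0 :=
        OZ_fsubst ih (hR i) 0 (by simp [deg2])
      have h2 : coeff 0 (F i) = 0 := by
        simpa [MvPowerSeries.coeff_zero_eq_constantCoeff] using hF i
      show coeff 0 (gseq R F (k+1) i) = 0
      rw [show gseq R F (k+1) i = F i - fsubst (gseq R F k) (R i) from rfl, map_sub, h1, h2,
        sub_zero]

lemma gseq_diff (hR : ∀ i, OZ 2 (R i)) (hF : noConst F) : ∀ k, ∀ i, OZ (k + 1) (gseq R F (k+1) i - gseq R F k i) := by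
  intro k
  induction k with
  | zero =>
      intro i
      exact OZ_sub (OZ_one_of_noConst (gseq_noConst hR hF 1) i)
        (OZ_one_of_noConst (gseq_noConst hR hF 0) i)
  | succ k ih =>
      intro i
      have key : gseq R F (k+2) i - gseq R F (k+1) i
          = fsubst (gseq R F k) (R i) - fsubst (gseq R F (k+1)) (R i) := by
        rw [show gseq R F (k+2) i = F i - fsubst (gseq R F (k+1)) (R i) from rfl,
          show gseq R F (k+1) i = F i - fsubst (gseq R F k) (R i) from rfl]
        ring
      intro m hm
      rw [key]
      refine coeff_fsubst_diff (gseq_noConst hR hF k) (gseq_noConst hR hF (k+1))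
        (t := k+1) (fun j => ?_) (hR i) m (by omega)
      intro m' hm'
      have h := ih j m' hm'
      rw [map_sub, sub_eq_zero] at h
      rw [map_sub, sub_eq_zero]
      exact h.symm

lemma gseq_stable (hR : ∀ i, OZ 2 (R i)) (hF : noConst F) : ∀ k k', k ≤ k' → ∀ i (m : Fin 2 →₀ ℕ), deg2 m < k →
    coeff m (gseq R F k i) = coeff m (gseq R F k' i) := by
  intro k k' hk
  induction k' , hk using Nat.le_induction with
  | base => intro i m _; rfl
  | succ k' hk ih =>
      intro i m hm
      rw [ih i m hm]
      have := gseq_diff hR hF k' i m (by omega)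
      rw [map_sub, sub_eq_zero] at this
      exact this.symm

/-- The limit of the iteration. -/
def glim (R F : Fin 2 → FPS) : Fin 2 → FPS :=
  fun i => (fun m => coeff m (gseq R F (deg2 m + 1) i))

lemma coeff_glim (i : Fin 2) (m : Fin 2 →₀ ℕ) :
    coeff m (glim R F i) = coeff m (gseq R F (deg2 m + 1) i) := rfl

lemma coeff_glim_eq (hR : ∀ i, OZ 2 (R i)) (hF : noConst F) {k : ℕ} (i : Fin 2) {m : Fin 2 →₀ ℕ} (hm : deg2 m < k) :
    coeff m (glim R F i) = coeff m (gseq R F k i) := by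
  rw [coeff_glim]
  exact gseq_stable hR hF (deg2 m + 1) k (by omega) i m (by omega)

lemma glim_noConst (hR : ∀ i, OZ 2 (R i)) (hF : noConst F) : noConst (glim R F) := by
  intro i
  have h0 : deg2 (0 : Fin 2 →₀ ℕ) < 1 := by simp [deg2]
  have := coeff_glim_eq hR hF (k := 1) i h0
  rw [← MvPowerSeries.coeff_zero_eq_constantCoeff]
  rw [this]
  simpa [MvPowerSeries.coeff_zero_eq_constantCoeff] using gseq_noConst hR hF 1 i

lemma glim_spec (hR : ∀ i, OZ 2 (R i)) (hF : noConst F) : ∀ i, fsubst (glim R F) ((MvPowerSeries.X i : FPS) + R i) = F i := by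
  intro i
  apply MvPowerSeries.ext
  intro m
  set n := deg2 m with hn
  have hglimnc := glim_noConst hR hF
  have hdiff : ∀ j, OZ (n + 1) (glim R F j - gseq R F (n+1) j) := by
    intro j m' hm'
    rw [map_sub, sub_eq_zero]
    exact coeff_glim_eq hR hF j hm'
  have h1 : coeff m (fsubst (glim R F) (R i)) = coeff m (fsubst (gseq R F (n+1)) (R i)) := by
    have := coeff_fsubst_diff hglimnc (gseq_noConst hR hF (n+1)) hdiff (hR i) m (by omega)
    rw [map_sub, sub_eq_zero] at this
    exact this
  rw [fsubst_add, fsubst_X hglimnc, map_add, h1,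
    coeff_glim_eq hR hF (k := n+2) i (by omega),
    show gseq R F (n+2) i = F i - fsubst (gseq R F (n+1)) (R i) from rfl, map_sub]
  ring

end existence

-- ### misc helpers for the main theorem

lemma coeff_truncLE (N : ℕ) (f : FPS) (m : Fin 2 →₀ ℕ) :
    coeff m (truncLE N f) = if deg2 m ≤ N then coeff m f else 0 := rfl

lemma noConst_id : noConst (fun i : Fin 2 => (MvPowerSeries.X i : FPS)) := by
  intro i
  simp [MvPowerSeries.constantCoeff_X]

lemma homog_support_deg2 {F : MvPolynomial (Fin 2) ℂ} {D : ℕ} (hF : F.IsHomogeneous D) :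
    ∀ s ∈ F.support, D ≤ deg2 s := by
  intro s hs
  by_contra h
  have hne : Finsupp.degree s ≠ D := by rw [← deg2_degree]; omega
  exact MvPolynomial.mem_support_iff.mp hs (hF.coeff_eq_zero hne)

lemma coe_pderiv_sum {F : MvPolynomial (Fin 2) ℂ} (j : Fin 2) :
    (↑(MvPolynomial.pderiv j F) : FPS)
      = ∑ s ∈ F.support,
          (↑(MvPolynomial.pderiv j (MvPolynomial.monomial s (MvPolynomial.coeff s F))) : FPS) := by
  conv_lhs => rw [MvPolynomial.as_sum F]
  rw [map_sum (MvPolynomial.pderiv j)]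
  exact map_sum MvPolynomial.coeToMvPowerSeries.ringHom _ _

lemma OZ_pderiv_coe {F : MvPolynomial (Fin 2) ℂ} {D : ℕ} (hF : ∀ s ∈ F.support, D ≤ deg2 s)
    (j : Fin 2) : OZ (D - 1) (↑(MvPolynomial.pderiv j F) : FPS) := by
  classical
  rw [coe_pderiv_sum]
  refine OZ_sum fun s hs => ?_
  rw [MvPolynomial.pderiv_monomial, MvPolynomial.coe_monomial]
  refine OZ_mono (OZ_monomial _ _) ?_
  have hD := hF s hs
  simp only [deg2, Finsupp.tsub_apply] at hD ⊢
  fin_cases j <;> simp [Finsupp.single_apply] <;> omega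

lemma OZ_of_X_mul {k : ℕ} {σ : FPS} (h : OZ (k + 1) ((MvPowerSeries.X 0 : FPS) * σ)) :
    OZ k σ := by
  intro m hm
  have key : coeff (m + Finsupp.single 0 1) ((MvPowerSeries.X 0 : FPS) * σ)
      = coeff m σ := by
    classical
    rw [MvPowerSeries.X, MvPowerSeries.coeff_monomial_mul, if_pos le_add_self, one_mul,
      add_tsub_cancel_right]
  rw [← key]
  refine h _ ?_
  rw [deg2_add, deg2_single]
  omega

lemma OZ_one_add_pow {w : FPS} {s : ℕ} (hw : OZ s w) (n : ℕ) :
    OZ (2 * s) ((1 + w) ^ n - (1 + (n : FPS) * w)) := by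
  induction n with
  | zero =>
      have : (1 + w) ^ 0 - (1 + ((0 : ℕ) : FPS) * w) = 0 := by push_cast; ring
      rw [this]; exact OZ_zero _
  | succ n ih =>
      have key : (1 + w) ^ (n + 1) - (1 + ((n + 1 : ℕ) : FPS) * w)
          = (1 + w) * ((1 + w) ^ n - (1 + (n : FPS) * w)) + (n : FPS) * (w * w) := by
        rw [pow_succ]
        push_cast
        ring
      rw [key]
      refine OZ_add (OZ_mul_left ih) (OZ_mul_left ?_)
      have := OZ_mul hw hw
      rwa [show s + s = 2 * s by ring] at this

/-- **Proposition 1.1.(ii)**: conjugating `f(z) = z + z₁^ν (P^μ(z) + O_{μ+1})` by a change of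
coordinates `χ(z) = z + H^d(z) + O_{d+1}` tangent to the identity preserving `{z₁ = 0}`
yields `z + z₁^ν [P^μ + ⋯ + P^{μ+d-1} + Jac(P^μ)·H^d − Jac(H^d)·P^μ + ν Ȟ^d₁ P^μ + O_{μ+d}]`. -/
theorem conjugation_by_tangent_change
    (ν μ d : ℕ) (hν : 1 ≤ ν) (hμ : 1 ≤ μ) (hd : 2 ≤ d)
    (f fo : Fin 2 → FPS) (P : Fin 2 → MvPolynomial (Fin 2) ℂ)
    -- `f(z) = z + z₁^ν f^o(z)` with `z₁` not dividing both components of `f^o`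
    (hf : ∀ i, f i = MvPowerSeries.X i + (MvPowerSeries.X 0 : FPS) ^ ν * fo i)
    (hcontact : ¬ ((MvPowerSeries.X 0 : FPS) ∣ fo 0 ∧ (MvPowerSeries.X 0 : FPS) ∣ fo 1))
    -- `P^μ` is the homogeneous part of degree `μ` of `f^o`, and `μ` is the pure order:
    (hPhom : ∀ i, (P i).IsHomogeneous μ) (hPne : ∃ i, P i ≠ 0)
    (hlow : ∀ i m, deg2 m < μ → MvPowerSeries.coeff m (fo i) = 0)
    (hPμ : ∀ i m, deg2 m = μ → MvPowerSeries.coeff m (fo i) = MvPolynomial.coeff m (P i))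
    -- the change of coordinates `χ(z) = z + H^d(z) + O_{d+1}`, with `H^d ∈ 𝒱_d`,
    -- `H^d₁ = z₁ Ȟ^d₁`, tangent to the identity and preserving `{z₁ = 0}`
    (H : Fin 2 → MvPolynomial (Fin 2) ℂ) (Hc : MvPolynomial (Fin 2) ℂ)
    (hHhom : ∀ i, (H i).IsHomogeneous d) (hHc : H 0 = MvPolynomial.X 0 * Hc)
    (χ : Fin 2 → FPS) (hχ0 : noConst χ)
    (hχline : (MvPowerSeries.X 0 : FPS) ∣ χ 0)
    (hχ : ∀ i m, deg2 m ≤ d →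
      MvPowerSeries.coeff m (χ i) = MvPowerSeries.coeff m (MvPowerSeries.X i + (↑(H i) : FPS))) :
    -- there is a formal self-map `g` with `χ ∘ g = f ∘ χ`, and any such `g` has the stated form
    (∃ g : Fin 2 → FPS, noConst g ∧ ∀ i, fsubst g (χ i) = fsubst χ (f i)) ∧
    ∀ g : Fin 2 → FPS, noConst g → (∀ i, fsubst g (χ i) = fsubst χ (f i)) →
      ∀ i m, deg2 m < ν + μ + d →
        MvPowerSeries.coeff m (g i)
          = MvPowerSeries.coeff m
              (MvPowerSeries.X i + (MvPowerSeries.X 0 : FPS) ^ ν *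
                (truncLE (μ + d - 1) (fo i) +
                  (((∑ j : Fin 2, MvPolynomial.pderiv j (P i) * H j)
                    - (∑ j : Fin 2, MvPolynomial.pderiv j (H i) * P j)
                    + (ν : ℂ) • (Hc * P i) : MvPolynomial (Fin 2) ℂ) : FPS))) := by
  classical
  -- ORDERS OF THE DATA
  have hfo_OZ : ∀ i, OZ μ (fo i) := fun i m hm => hlow i m hm
  have hQOZ : ∀ i, OZ (μ + 1) (fo i - ↑(P i)) := by
    intro i m hm
    rw [map_sub]
    by_cases h : deg2 m < μ
    · rw [hlow i m h, (OZ_coe_homog (hPhom i)) m h, sub_zero]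
    · have hμm : deg2 m = μ := by omega
      rw [hPμ i m hμm, MvPolynomial.coeff_coe, sub_self]
  have hfnc : noConst f := by
    intro i
    rw [← MvPowerSeries.coeff_zero_eq_constantCoeff, hf i, map_add]
    rw [(OZ_X i) 0 (by simp [deg2]),
      (OZ_mul (OZ_X_pow ν 0) (hfo_OZ i)) 0 (by simp [deg2]; omega), add_zero]
  have hρ : ∀ i, OZ (d + 1) (χ i - MvPowerSeries.X i - (↑(H i) : FPS)) := by
    intro i m hm
    rw [map_sub, map_sub, hχ i m (by omega), map_add, MvPolynomial.coeff_coe]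
    ring
  have hRd : ∀ i, OZ d (χ i - MvPowerSeries.X i) := by
    intro i
    have key : χ i - MvPowerSeries.X i = (↑(H i) : FPS) + (χ i - MvPowerSeries.X i - (↑(H i) : FPS)) := by ring
    rw [key]
    exact OZ_add (OZ_coe_homog (hHhom i)) (OZ_mono (hρ i) (by omega))
  have hR2 : ∀ i, OZ 2 (χ i - MvPowerSeries.X i) := fun i => OZ_mono (hRd i) hd
  -- EXISTENCE
  have hFnc : noConst (fun i => fsubst χ (f i)) := noConst_fsubst hχ0 hfnc
  have hEx : ∃ g : Fin 2 → FPS, noConst g ∧ ∀ i, fsubst g (χ i) = fsubst χ (f i) := by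
    refine ⟨glim (fun i => χ i - MvPowerSeries.X i) (fun i => fsubst χ (f i)),
      glim_noConst hR2 hFnc, fun i => ?_⟩
    have := glim_spec hR2 hFnc i
    rwa [show MvPowerSeries.X i + (χ i - MvPowerSeries.X i) = χ i by ring] at this
  refine ⟨hEx, ?_⟩
  -- FORMULA PART
  intro g hgnc hgeq i m hm
  set PHpoly := ∑ j : Fin 2, MvPolynomial.pderiv j (P i) * H j with hPHdef
  set HPpoly := ∑ j : Fin 2, MvPolynomial.pderiv j (H i) * P j with hHPdef
  -- Lipschitz wrappers
  have lip : ∀ (g₁ g₂ : Fin 2 → FPS), noConst g₁ → noConst g₂ → ∀ (t k K : ℕ) (h : FPS),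
      (∀ j, OZ t (g₁ j - g₂ j)) → OZ k h → K + 1 ≤ k + t →
      OZ K (fsubst g₁ h - fsubst g₂ h) :=
    fun g₁ g₂ h₁ h₂ t k K h hdiff hOZ hK m' hm' =>
      coeff_fsubst_diff h₁ h₂ hdiff hOZ m' (by omega)
  have hgid : ∀ (h : FPS) (k t K : ℕ), OZ k h → (∀ j, OZ t (g j - MvPowerSeries.X j)) →
      K + 1 ≤ k + t → OZ K (h - fsubst g h) := by
    intro h k t K hOZ hdiff hK
    have h1 := lip (fun j => (MvPowerSeries.X j : FPS)) g noConst_id hgnc t k K h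
      (fun j => by have := OZ_neg (hdiff j); simpa using this) hOZ hK
    rwa [fsubst_id] at h1
  -- the master equation
  have star : ∀ j, g j - MvPowerSeries.X j
      = ((χ j - MvPowerSeries.X j) - fsubst g (χ j - MvPowerSeries.X j))
        + (χ 0) ^ ν * fsubst χ (fo j) := by
    intro j
    have h1 : fsubst g (χ j) = g j + fsubst g (χ j - MvPowerSeries.X j) := by
      conv_lhs => rw [show χ j = MvPowerSeries.X j + (χ j - MvPowerSeries.X j) by ring]
      rw [fsubst_add, fsubst_X hgnc]
    have h2 : fsubst χ (f j) = χ j + (χ 0) ^ ν * fsubst χ (fo j) := by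
      rw [hf j, fsubst_add, fsubst_X hχ0, fsubst_mul hχ0, fsubst_pow hχ0, fsubst_X hχ0]
    have h3 := hgeq j
    rw [h1, h2] at h3
    linear_combination h3
  -- order ν+μ of g - id
  have hcomp_fo : ∀ j, OZ (ν + μ) ((χ 0) ^ ν * fsubst χ (fo j)) := by
    intro j
    refine OZ_mul ?_ (OZ_fsubst hχ0 (hfo_OZ j))
    simpa using OZ_pow (n := ν) (OZ_one_of_noConst hχ0 0)
  have boot : ∀ t, t ≤ ν + μ → ∀ j, OZ t (g j - MvPowerSeries.X j) := by
    intro t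
    induction t with
    | zero => exact fun _ j => OZ_any _
    | succ t ih =>
        intro ht j
        rcases Nat.eq_zero_or_pos t with h0 | hpos
        · subst h0
          exact OZ_sub (OZ_one_of_noConst hgnc j) (OZ_X j)
        · have hu_t : ∀ j, OZ t (g j - MvPowerSeries.X j) := ih (by omega)
          rw [star j]
          refine OZ_add ?_ (OZ_mono (hcomp_fo j) ht)
          exact hgid _ 2 t (t + 1) (hR2 j) hu_t (by omega)
  have hu : ∀ j, OZ (ν + μ) (g j - MvPowerSeries.X j) := boot (ν + μ) le_rfl
  -- order ν+μ+1 of g - id - X0^ν P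
  have hu1 : ∀ j, OZ (ν + μ + 1)
      (g j - MvPowerSeries.X j - (MvPowerSeries.X 0 : FPS) ^ ν * (↑(P j) : FPS)) := by
    intro j
    have key : g j - MvPowerSeries.X j - (MvPowerSeries.X 0 : FPS) ^ ν * (↑(P j) : FPS)
        = (((χ j - MvPowerSeries.X j) - fsubst g (χ j - MvPowerSeries.X j))
            + ((χ 0) ^ ν - (MvPowerSeries.X 0 : FPS) ^ ν) * fsubst χ (fo j))
          + ((MvPowerSeries.X 0 : FPS) ^ ν * (fsubst χ (fo j) - fo j)
            + (MvPowerSeries.X 0 : FPS) ^ ν * (fo j - (↑(P j) : FPS))) := by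
      rw [star j]; ring
    rw [key]
    refine OZ_add (OZ_add ?_ ?_) (OZ_add ?_ ?_)
    · exact hgid _ 2 (ν + μ) (ν + μ + 1) (hR2 j) hu (by omega)
    · refine OZ_mono (OZ_mul (?_ : OZ (ν + d - 1) _) (OZ_fsubst hχ0 (hfo_OZ j))) (by omega)
      intro m' hm'
      exact coeff_pow_diff (OZ_one_of_noConst hχ0 0) (OZ_X 0) (hRd 0) ν m' (by omega)
    · refine OZ_mono (OZ_mul (OZ_X_pow ν 0) (?_ : OZ (μ + d - 1) _)) (by omega)
      have h1 := lip χ (fun j => (MvPowerSeries.X j : FPS)) hχ0 noConst_id d μ (μ + d - 1)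
        (fo j) hRd (hfo_OZ j) (by omega)
      rwa [fsubst_id] at h1
    · exact OZ_mono (OZ_mul (OZ_X_pow ν 0) (hQOZ j)) (by omega)
  have hgfun : (fun j => (MvPowerSeries.X j : FPS) + (g j - MvPowerSeries.X j)) = g :=
    funext fun j => by ring
  have hχfun : (fun j => (MvPowerSeries.X j : FPS) + (χ j - MvPowerSeries.X j)) = χ :=
    funext fun j => by ring
  -- CLAIM A
  have hcoeHP : (↑HPpoly : FPS)
      = ∑ j : Fin 2, (↑(MvPolynomial.pderiv j (H i)) : FPS) * (↑(P j) : FPS) := by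
    rw [hHPdef, Fin.sum_univ_two, Fin.sum_univ_two, MvPolynomial.coe_add,
      MvPolynomial.coe_mul, MvPolynomial.coe_mul]
  have claimA : OZ (ν + μ + d)
      (((χ i - MvPowerSeries.X i) - fsubst g (χ i - MvPowerSeries.X i))
        + (MvPowerSeries.X 0 : FPS) ^ ν * (↑HPpoly : FPS)) := by
    have hρg : OZ (ν + μ + d) ((χ i - MvPowerSeries.X i - (↑(H i) : FPS))
        - fsubst g (χ i - MvPowerSeries.X i - (↑(H i) : FPS))) :=
      hgid _ (d + 1) (ν + μ) (ν + μ + d) (hρ i) hu (by omega)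
    have tayH : OZ (ν + μ + d) (fsubst g (↑(H i) : FPS) - ((↑(H i) : FPS)
        + ∑ j : Fin 2, (↑(MvPolynomial.pderiv j (H i)) : FPS) * (g j - MvPowerSeries.X j))) := by
      have h := taylor_poly (t := ν + μ) hu (by omega) (H i) (homog_support_deg2 (hHhom i))
      rw [hgfun] at h
      exact OZ_mono h (by omega)
    have hsum : OZ (ν + μ + d) (∑ j : Fin 2, (↑(MvPolynomial.pderiv j (H i)) : FPS)
        * (g j - MvPowerSeries.X j - (MvPowerSeries.X 0 : FPS) ^ ν * (↑(P j) : FPS))) := by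
      refine OZ_sum fun j _ => ?_
      exact OZ_mono (OZ_mul (OZ_pderiv_coe (homog_support_deg2 (hHhom i)) j) (hu1 j)) (by omega)
    have hsplit : fsubst g (χ i - MvPowerSeries.X i) = fsubst g (↑(H i) : FPS)
        + fsubst g (χ i - MvPowerSeries.X i - (↑(H i) : FPS)) := by
      rw [← fsubst_add]
      congr 1
      ring
    have key : ((χ i - MvPowerSeries.X i) - fsubst g (χ i - MvPowerSeries.X i))
          + (MvPowerSeries.X 0 : FPS) ^ ν * (↑HPpoly : FPS)
        = ((χ i - MvPowerSeries.X i - (↑(H i) : FPS))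
            - fsubst g (χ i - MvPowerSeries.X i - (↑(H i) : FPS)))
          - (fsubst g (↑(H i) : FPS) - ((↑(H i) : FPS)
              + ∑ j : Fin 2, (↑(MvPolynomial.pderiv j (H i)) : FPS) * (g j - MvPowerSeries.X j)))
          - (∑ j : Fin 2, (↑(MvPolynomial.pderiv j (H i)) : FPS)
              * (g j - MvPowerSeries.X j - (MvPowerSeries.X 0 : FPS) ^ ν * (↑(P j) : FPS))) := by
      rw [hsplit, hcoeHP, Fin.sum_univ_two, Fin.sum_univ_two, Fin.sum_univ_two]
      ring
    rw [key]
    exact OZ_sub (OZ_sub hρg tayH) hsum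
  -- CLAIM B
  obtain ⟨ψ, hψ⟩ := hχline
  have hH0coe : (↑(H 0) : FPS) = (MvPowerSeries.X 0 : FPS) * (↑Hc : FPS) := by
    rw [hHc, MvPolynomial.coe_mul, MvPolynomial.coe_X]
  have hσ : OZ d (ψ - 1 - (↑Hc : FPS)) := by
    apply OZ_of_X_mul (k := d)
    rw [show (MvPowerSeries.X 0 : FPS) * (ψ - 1 - (↑Hc : FPS))
      = χ 0 - MvPowerSeries.X 0 - (↑(H 0) : FPS) by rw [hψ, hH0coe]; ring]
    exact hρ 0
  have hHcOZ : OZ (d - 1) (↑Hc : FPS) := by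
    apply OZ_of_X_mul (k := d - 1)
    rw [show d - 1 + 1 = d by omega, ← hH0coe]
    exact OZ_coe_homog (hHhom 0)
  have hψν : OZ d (ψ ^ ν - (1 + (ν : FPS) * (↑Hc : FPS))) := by
    have hw : OZ (d - 1) ((↑Hc : FPS) + (ψ - 1 - (↑Hc : FPS))) :=
      OZ_add hHcOZ (OZ_mono hσ (by omega))
    have h1 := OZ_one_add_pow hw ν
    have hψeq : ψ = 1 + ((↑Hc : FPS) + (ψ - 1 - (↑Hc : FPS))) := by ring
    have key : ψ ^ ν - (1 + (ν : FPS) * (↑Hc : FPS))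
        = ((1 + ((↑Hc : FPS) + (ψ - 1 - (↑Hc : FPS)))) ^ ν
            - (1 + (ν : FPS) * ((↑Hc : FPS) + (ψ - 1 - (↑Hc : FPS)))))
          + (ν : FPS) * (ψ - 1 - (↑Hc : FPS)) := by
      conv_lhs => rw [hψeq]
      ring
    rw [key]
    exact OZ_add (OZ_mono h1 (by omega)) (OZ_mul_left hσ)
  have hcoePH : (↑PHpoly : FPS)
      = ∑ j : Fin 2, (↑(MvPolynomial.pderiv j (P i)) : FPS) * (↑(H j) : FPS) := by
    rw [hPHdef, Fin.sum_univ_two, Fin.sum_univ_two, MvPolynomial.coe_add,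
      MvPolynomial.coe_mul, MvPolynomial.coe_mul]
  have hPHOZ : OZ (μ + d - 1) (↑PHpoly : FPS) := by
    rw [hcoePH]
    refine OZ_sum fun j _ => ?_
    exact OZ_mono (OZ_mul (OZ_pderiv_coe (homog_support_deg2 (hPhom i)) j)
      (OZ_coe_homog (hHhom j))) (by omega)
  have hfoχ : OZ (μ + d) (fsubst χ (fo i) - (fo i + (↑PHpoly : FPS))) := by
    have hQcomp : OZ (μ + d) (fsubst χ (fo i - (↑(P i) : FPS)) - (fo i - (↑(P i) : FPS))) :=
      lip χ (fun j => (MvPowerSeries.X j : FPS)) hχ0 noConst_id d (μ + 1) (μ + d)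
        (fo i - (↑(P i) : FPS)) hRd (hQOZ i) (by omega)
        |> fun h => by rwa [fsubst_id] at h
    have tayP : OZ (μ + d) (fsubst χ (↑(P i) : FPS) - ((↑(P i) : FPS)
        + ∑ j : Fin 2, (↑(MvPolynomial.pderiv j (P i)) : FPS) * (χ j - MvPowerSeries.X j))) := by
      have h := taylor_poly (t := d) hRd (by omega) (P i) (homog_support_deg2 (hPhom i))
      rw [hχfun] at h
      exact OZ_mono h (by omega)
    have hsum : OZ (μ + d) (∑ j : Fin 2, (↑(MvPolynomial.pderiv j (P i)) : FPS)
        * (χ j - MvPowerSeries.X j - (↑(H j) : FPS))) := by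
      refine OZ_sum fun j _ => ?_
      exact OZ_mono (OZ_mul (OZ_pderiv_coe (homog_support_deg2 (hPhom i)) j) (hρ j)) (by omega)
    have hsplit : fsubst χ (fo i) = fsubst χ (fo i - (↑(P i) : FPS))
        + fsubst χ (↑(P i) : FPS) := by
      rw [← fsubst_add]
      congr 1
      ring
    have key : fsubst χ (fo i) - (fo i + (↑PHpoly : FPS))
        = (fsubst χ (fo i - (↑(P i) : FPS)) - (fo i - (↑(P i) : FPS)))
          + (fsubst χ (↑(P i) : FPS) - ((↑(P i) : FPS)
              + ∑ j : Fin 2, (↑(MvPolynomial.pderiv j (P i)) : FPS) * (χ j - MvPowerSeries.X j)))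
          + (∑ j : Fin 2, (↑(MvPolynomial.pderiv j (P i)) : FPS)
              * (χ j - MvPowerSeries.X j - (↑(H j) : FPS))) := by
      rw [hsplit, hcoePH, Fin.sum_univ_two, Fin.sum_univ_two, Fin.sum_univ_two]
      ring
    rw [key]
    exact OZ_add (OZ_add hQcomp tayP) hsum
  have claimB : OZ (ν + μ + d)
      ((χ 0) ^ ν * fsubst χ (fo i)
        - (MvPowerSeries.X 0 : FPS) ^ ν * (fo i + (↑PHpoly : FPS)
            + (ν : FPS) * ((↑Hc : FPS) * (↑(P i) : FPS)))) := by
    have inner : OZ (μ + d)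
        (ψ ^ ν * fsubst χ (fo i) - (fo i + (↑PHpoly : FPS)
          + (ν : FPS) * ((↑Hc : FPS) * (↑(P i) : FPS)))) := by
      have key : ψ ^ ν * fsubst χ (fo i) - (fo i + (↑PHpoly : FPS)
            + (ν : FPS) * ((↑Hc : FPS) * (↑(P i) : FPS)))
          = (ψ ^ ν - (1 + (ν : FPS) * (↑Hc : FPS))) * fsubst χ (fo i)
            + (1 + (ν : FPS) * (↑Hc : FPS)) * (fsubst χ (fo i) - (fo i + (↑PHpoly : FPS)))
            + ((ν : FPS) * ((↑Hc : FPS) * (fo i - (↑(P i) : FPS)))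
              + (ν : FPS) * ((↑Hc : FPS) * (↑PHpoly : FPS))) := by ring
      rw [key]
      refine OZ_add (OZ_add ?_ (OZ_mul_left hfoχ)) (OZ_add ?_ ?_)
      · exact OZ_mono (OZ_mul hψν (OZ_fsubst hχ0 (hfo_OZ i))) (by omega)
      · exact OZ_mul_left (OZ_mono (OZ_mul hHcOZ (hQOZ i)) (by omega))
      · exact OZ_mul_left (OZ_mono (OZ_mul hHcOZ hPHOZ) (by omega))
    have key2 : (χ 0) ^ ν * fsubst χ (fo i)
          - (MvPowerSeries.X 0 : FPS) ^ ν * (fo i + (↑PHpoly : FPS)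
              + (ν : FPS) * ((↑Hc : FPS) * (↑(P i) : FPS)))
        = (MvPowerSeries.X 0 : FPS) ^ ν
            * (ψ ^ ν * fsubst χ (fo i) - (fo i + (↑PHpoly : FPS)
                + (ν : FPS) * ((↑Hc : FPS) * (↑(P i) : FPS)))) := by
      rw [hψ, mul_pow]
      ring
    rw [key2]
    exact OZ_mono (OZ_mul (OZ_X_pow ν 0) inner) (by omega)
  -- FINAL ASSEMBLY
  have hsmulcoe : (↑((ν : ℂ) • (Hc * P i)) : FPS)
      = (ν : FPS) * ((↑Hc : FPS) * (↑(P i) : FPS)) := by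
    rw [MvPolynomial.smul_eq_C_mul, MvPolynomial.coe_mul, MvPolynomial.coe_C,
      MvPolynomial.coe_mul,
      show (MvPowerSeries.C) ((ν : ℕ) : ℂ) = ((ν : ℕ) : FPS) from
        map_natCast _ ν]
  have hPolyCoe : (↑(PHpoly - HPpoly + (ν : ℂ) • (Hc * P i)) : FPS)
      = (↑PHpoly : FPS) - (↑HPpoly : FPS)
        + (ν : FPS) * ((↑Hc : FPS) * (↑(P i) : FPS)) := by
    have h1 := map_add MvPolynomial.coeToMvPowerSeries.ringHom
      (PHpoly - HPpoly) ((ν : ℂ) • (Hc * P i))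
    have h2 := map_sub MvPolynomial.coeToMvPowerSeries.ringHom PHpoly HPpoly
    simp only [MvPolynomial.coeToMvPowerSeries.ringHom_apply] at h1 h2
    rw [h1, h2, hsmulcoe]
  have htail : OZ (ν + μ + d)
      ((MvPowerSeries.X 0 : FPS) ^ ν * (fo i - truncLE (μ + d - 1) (fo i))) := by
    refine OZ_mono (OZ_mul (OZ_X_pow ν 0) (?_ : OZ (μ + d) _)) (by omega)
    intro m' hm'
    rw [map_sub, coeff_truncLE, if_pos (by omega), sub_self]
  refine OZ_coeff_eq ?_ hm
  rw [hPolyCoe]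
  have key2 : g i - (MvPowerSeries.X i + (MvPowerSeries.X 0 : FPS) ^ ν
        * (truncLE (μ + d - 1) (fo i) + ((↑PHpoly : FPS) - (↑HPpoly : FPS)
            + (ν : FPS) * ((↑Hc : FPS) * (↑(P i) : FPS)))))
      = ((((χ i - MvPowerSeries.X i) - fsubst g (χ i - MvPowerSeries.X i))
          + (MvPowerSeries.X 0 : FPS) ^ ν * (↑HPpoly : FPS))
        + ((χ 0) ^ ν * fsubst χ (fo i)
            - (MvPowerSeries.X 0 : FPS) ^ ν * (fo i + (↑PHpoly : FPS)
                + (ν : FPS) * ((↑Hc : FPS) * (↑(P i) : FPS)))))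
        + (MvPowerSeries.X 0 : FPS) ^ ν * (fo i - truncLE (μ + d - 1) (fo i)) := by
    linear_combination star i
  rw [key2]
  exact OZ_add (OZ_add claimA claimB) htail
end
end

section
/- Fix an integer ν ≥ 1, and for λ ∈ ℂ set σ_{d,h} = (ν+1−h)λ − (d−h) and τ_{d,k} = (k+1−d) − kλ. Then the set E of all λ ∈ ℂ such that either σ_{d,h} = 0 for some integers d ≥ 2, 1 ≤ h ≤ d with (d,h) ≠ (ν+1,ν+1), or τ_{d,k} = 0 for some integers d ≥ 2, 0 ≤ k ≤ d, is equal to ⋃_{q=1}^{ν} { p/q : p ∈ ℕ } ∪ { 1/d : d ∈ ℕ, d ≥ 2 } ∪ {0} ∪ ℚ⁻, where ℚ⁻ denotes the negative rationals. -/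
/-- The exceptional set `E`: for fixed `ν ≥ 1`, the set of `λ ∈ ℂ` such that
`σ_{d,h} = (ν+1−h)λ − (d−h)` vanishes for some `d ≥ 2`, `1 ≤ h ≤ d`, `(d,h) ≠ (ν+1,ν+1)`,
or `τ_{d,k} = (k+1−d) − kλ` vanishes for some `d ≥ 2`, `0 ≤ k ≤ d`, equals
`⋃_{q=1}^{ν} { p/q : p ∈ ℕ } ∪ { 1/d : d ≥ 2 } ∪ {0} ∪ ℚ⁻`. -/
theorem exceptional_set_eq (ν : ℕ) (hν : 1 ≤ ν) :
    {l : ℂ |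
      (∃ d h : ℕ, 2 ≤ d ∧ 1 ≤ h ∧ h ≤ d ∧ (d, h) ≠ (ν + 1, ν + 1) ∧
        ((ν : ℂ) + 1 - h) * l - ((d : ℂ) - h) = 0) ∨
      (∃ d k : ℕ, 2 ≤ d ∧ k ≤ d ∧ ((k : ℂ) + 1 - d) - k * l = 0)}
    = {x : ℂ | ∃ q p : ℕ, 1 ≤ q ∧ q ≤ ν ∧ x = (p : ℂ) / q}
      ∪ {x : ℂ | ∃ d : ℕ, 2 ≤ d ∧ x = 1 / (d : ℂ)}
      ∪ {0}
      ∪ {x : ℂ | ∃ r : ℚ, r < 0 ∧ x = (r : ℂ)} := by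
  ext l
  simp only [Set.mem_setOf_eq, Set.mem_union, Set.mem_singleton_iff]
  constructor
  · rintro (⟨d, h, hd2, hh1, hhd, hne, heq⟩ | ⟨d, k, hd2, hkd, heq⟩)
    · rcases lt_trichotomy h (ν+1) with h1 | h1 | h1
      · -- h ≤ ν : positive rational p/q bucket
        left; left; left
        refine ⟨ν+1-h, d-h, by omega, by omega, ?_⟩
        have hq : ((ν+1-h:ℕ):ℂ) ≠ 0 := Nat.cast_ne_zero.mpr (by omega)
        rw [eq_div_iff hq, Nat.cast_sub (by omega : h ≤ ν+1), Nat.cast_sub hhd]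
        push_cast
        linear_combination heq
      · exfalso; apply hne
        subst h1
        push_cast at heq
        have : (d:ℂ) = ((ν:ℂ)+1) := by linear_combination -heq
        have hd : d = ν+1 := by exact_mod_cast this
        simp [hd]
      · -- h > ν+1
        have hcoef : ((ν:ℂ)+1-h) = -(((h-(ν+1):ℕ)):ℂ) := by
          rw [Nat.cast_sub (by omega)]; push_cast; ring
        have hb0 : ((h-(ν+1):ℕ):ℂ) ≠ 0 := Nat.cast_ne_zero.mpr (by omega)
        by_cases hdh : d = h
        · -- l = 0
          left; right
          subst hdh
          have h2 : ((ν:ℂ)+1-d) * l = 0 := by linear_combination heq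
          rw [hcoef, neg_mul, neg_eq_zero] at h2
          exact (mul_eq_zero.mp h2).resolve_left hb0
        · -- negative rational
          right
          refine ⟨-(((d-h:ℕ):ℚ)/((h-(ν+1):ℕ):ℚ)), ?_, ?_⟩
          · have : (0:ℚ) < ((d-h:ℕ):ℚ)/((h-(ν+1):ℕ):ℚ) :=
              div_pos (by exact_mod_cast Nat.pos_of_ne_zero (by omega))
                (by exact_mod_cast Nat.pos_of_ne_zero (by omega))
            linarith
          · push_cast
            rw [Nat.cast_sub hhd, Nat.cast_sub (by omega : ν+1 ≤ h)]
            have hb0' : (h:ℂ) - ((ν:ℂ)+1) ≠ 0 := by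
              rw [Nat.cast_sub (by omega : ν+1 ≤ h)] at hb0
              push_cast at hb0
              convert hb0 using 2
            push_cast
            field_simp
            linear_combination -heq
    · -- case B
      rcases Nat.eq_zero_or_pos k with hk0 | hk1
      · exfalso
        subst hk0
        push_cast at heq
        have : (d:ℂ) = 1 := by linear_combination -heq
        have : d = 1 := by exact_mod_cast this
        omega
      · have hk0 : (k:ℂ) ≠ 0 := Nat.cast_ne_zero.mpr (by omega)
        by_cases hkd' : k = d
        · -- l = 1/d
          left; left; right
          refine ⟨d, hd2, ?_⟩
          subst hkd'
          rw [eq_div_iff hk0]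
          linear_combination -heq
        · by_cases hkd1 : k + 1 = d
          · -- l = 0
            left; right
            have h2 : (k:ℂ) * l = 0 := by
              have hdc : (d:ℂ) = (k:ℂ)+1 := by rw [← hkd1]; push_cast; ring
              rw [hdc] at heq
              linear_combination -heq
            exact (mul_eq_zero.mp h2).resolve_left hk0
          · -- negative rational
            right
            refine ⟨-(((d-(k+1):ℕ):ℚ)/(k:ℚ)), ?_, ?_⟩
            · have : (0:ℚ) < ((d-(k+1):ℕ):ℚ)/(k:ℚ) :=
                div_pos (by exact_mod_cast Nat.pos_of_ne_zero (by omega))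
                  (by exact_mod_cast Nat.pos_of_ne_zero (by omega))
              linarith
            · push_cast
              rw [Nat.cast_sub (by omega : k+1 ≤ d)]
              push_cast
              field_simp
              linear_combination -heq
  · rintro (((⟨q, p, hq1, hqν, hx⟩ | ⟨d, hd2, hx⟩) | hx) | ⟨r, hr, hx⟩)
    · by_cases hp : p = 0
      · right
        refine ⟨2, 1, le_refl _, by omega, ?_⟩
        subst hp
        simp at hx
        rw [hx]; norm_num
      · left
        refine ⟨p + (ν+1-q), ν+1-q, by omega, by omega, by omega, ?_, ?_⟩
        · intro hc
          rw [Prod.mk.injEq] at hc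
          omega
        · set m := ν+1-q with hmdef
          have hm : (m:ℂ) = (ν:ℂ)+1-(q:ℂ) := by
            rw [hmdef, Nat.cast_sub (by omega : q ≤ ν+1)]; push_cast; ring
          have hq0 : (q:ℂ) ≠ 0 := Nat.cast_ne_zero.mpr (by omega)
          rw [hx]
          push_cast [hm]
          field_simp
          ring
    · right
      refine ⟨d, d, hd2, le_refl _, ?_⟩
      have hd0 : (d:ℂ) ≠ 0 := Nat.cast_ne_zero.mpr (by omega)
      rw [hx]
      field_simp
      ring
    · right
      exact ⟨2, 1, le_refl _, by omega, by rw [hx]; norm_num⟩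
    · left
      set a := r.num.natAbs with ha
      set b := r.den with hb
      refine ⟨a + (ν+1+b), ν+1+b, by omega, by omega, by omega, ?_, ?_⟩
      · intro hc; rw [Prod.mk.injEq] at hc
        have : r.den ≠ 0 := r.den_nz
        omega
      · have hnum : (r.num : ℂ) = -(a:ℂ) := by
          have h1 : (a:ℤ) = -r.num := Int.ofNat_natAbs_of_nonpos (le_of_lt (Rat.num_neg.mpr hr))
          rw [show r.num = -(a:ℤ) by omega]
          push_cast; ring
        have hden : ((b:ℕ):ℂ) ≠ 0 := Nat.cast_ne_zero.mpr r.den_nz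
        have hcast : (r:ℂ) = (r.num:ℂ) / (r.den:ℂ) := by
          rw [Rat.cast_def]
        rw [hx, hcast, hnum]
        push_cast
        field_simp
        rw [hb]; ring
end
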